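/- arXiv:1007.4275 — 9 statements merged into one kernel-verified Lean document; each statement's English description precedes it below -/
import Mathlib

section
/- Let (N; a₁, a₂, a₃, a₄) be admissible. If N is odd, or if N is even and at least one of the aᵢ is even, then there exist integers k₁, k₂, k₃, k₄ such that N divides k₁a₁ + k₂a₂ + k₃a₃ + k₄a₄ and k₁ + k₂ + k₃ + k₄ is odd. -/
/-- Helper: with one even and one odd value, we can find coefficients whose
weighted sum is zero (hence divisible by anything) and whose sum is odd. -/
lemma pairCase (N x y : ℕ) (hx : Even x) (hy : Odd y) :
    ∃ u v : ℤ, (N : ℤ) ∣ u * x + v * y ∧ Odd (u + v) := by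
  refine ⟨(y : ℤ), -(x : ℤ), ⟨0, by ring⟩, ?_⟩
  obtain ⟨m, hm⟩ := hy
  obtain ⟨l, hl⟩ := hx
  exact ⟨m - l, by push_cast [hm, hl]; ring⟩

/-- Arithmetic core of Lemma 2.1 (nontrivial holonomy case): for admissible parameters
`(N; a₁, a₂, a₃, a₄)`, if `N` is odd, or `N` is even and at least one `aᵢ` is even,
then there are integers `k₁,…,k₄` with `N ∣ k₁a₁ + k₂a₂ + k₃a₃ + k₄a₄` and
`k₁ + k₂ + k₃ + k₄` odd. -/
theorem stmt1 (N a1 a2 a3 a4 : ℕ) (hN : 1 < N)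
    (ha1 : 0 < a1) (ha2 : 0 < a2) (ha3 : 0 < a3) (ha4 : 0 < a4)
    (hb1 : a1 ≤ N) (hb2 : a2 ≤ N) (hb3 : a3 ≤ N) (hb4 : a4 ≤ N)
    (hgcd : Nat.gcd (Nat.gcd (Nat.gcd (Nat.gcd N a1) a2) a3) a4 = 1)
    (hsum : N ∣ a1 + a2 + a3 + a4)
    (hcase : Odd N ∨ (Even N ∧ (Even a1 ∨ Even a2 ∨ Even a3 ∨ Even a4))) :
    ∃ k1 k2 k3 k4 : ℤ,
      (N : ℤ) ∣ k1 * a1 + k2 * a2 + k3 * a3 + k4 * a4 ∧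
      Odd (k1 + k2 + k3 + k4) := by
  rcases hcase with hNodd | ⟨hNe, he⟩
  · refine ⟨(N : ℤ), 0, 0, 0, ⟨(a1 : ℤ), by push_cast; ring⟩, ?_⟩
    obtain ⟨m, hm⟩ := hNodd
    exact ⟨m, by push_cast [hm]; ring⟩
  · -- N even: not all aᵢ can be even, else the gcd would be even
    have hnotall : ¬ (Even a1 ∧ Even a2 ∧ Even a3 ∧ Even a4) := by
      rintro ⟨e1, e2, e3, e4⟩
      have h2 : 2 ∣ Nat.gcd (Nat.gcd (Nat.gcd (Nat.gcd N a1) a2) a3) a4 := by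
        refine Nat.dvd_gcd (Nat.dvd_gcd (Nat.dvd_gcd (Nat.dvd_gcd hNe.two_dvd
          e1.two_dvd) e2.two_dvd) e3.two_dvd) e4.two_dvd
      rw [hgcd] at h2
      omega
    rcases he with hx | hx | hx | hx
    · rcases Nat.even_or_odd a2 with h2 | h2
      · rcases Nat.even_or_odd a3 with h3 | h3
        · rcases Nat.even_or_odd a4 with h4 | h4
          · exact absurd ⟨hx, h2, h3, h4⟩ hnotall
          · obtain ⟨u, v, hd, ho⟩ := pairCase N a1 a4 hx h4
            exact ⟨u, 0, 0, v, by simpa using hd, by simpa using ho⟩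
        · obtain ⟨u, v, hd, ho⟩ := pairCase N a1 a3 hx h3
          exact ⟨u, 0, v, 0, by simpa using hd, by simpa using ho⟩
      · obtain ⟨u, v, hd, ho⟩ := pairCase N a1 a2 hx h2
        exact ⟨u, v, 0, 0, by simpa using hd, by simpa using ho⟩
    · rcases Nat.even_or_odd a1 with h1 | h1
      · rcases Nat.even_or_odd a3 with h3 | h3
        · rcases Nat.even_or_odd a4 with h4 | h4
          · exact absurd ⟨h1, hx, h3, h4⟩ hnotall
          · obtain ⟨u, v, hd, ho⟩ := pairCase N a2 a4 hx h4
            exact ⟨0, u, 0, v, by simpa using hd, by simpa using ho⟩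
        · obtain ⟨u, v, hd, ho⟩ := pairCase N a2 a3 hx h3
          exact ⟨0, u, v, 0, by simpa using hd, by simpa using ho⟩
      · obtain ⟨u, v, hd, ho⟩ := pairCase N a2 a1 hx h1
        exact ⟨v, u, 0, 0, by simpa [add_comm] using hd, by simpa [add_comm] using ho⟩
    · rcases Nat.even_or_odd a1 with h1 | h1
      · rcases Nat.even_or_odd a2 with h2 | h2
        · rcases Nat.even_or_odd a4 with h4 | h4
          · exact absurd ⟨h1, h2, hx, h4⟩ hnotall
          · obtain ⟨u, v, hd, ho⟩ := pairCase N a3 a4 hx h4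
            exact ⟨0, 0, u, v, by simpa using hd, by simpa using ho⟩
        · obtain ⟨u, v, hd, ho⟩ := pairCase N a3 a2 hx h2
          exact ⟨0, v, u, 0, by simpa [add_comm] using hd, by simpa [add_comm] using ho⟩
      · obtain ⟨u, v, hd, ho⟩ := pairCase N a3 a1 hx h1
        exact ⟨v, 0, u, 0, by simpa [add_comm] using hd, by simpa [add_comm] using ho⟩
    · rcases Nat.even_or_odd a1 with h1 | h1
      · rcases Nat.even_or_odd a2 with h2 | h2
        · rcases Nat.even_or_odd a3 with h3 | h3
          · exact absurd ⟨h1, h2, h3, hx⟩ hnotall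
          · obtain ⟨u, v, hd, ho⟩ := pairCase N a4 a3 hx h3
            exact ⟨0, 0, v, u, by simpa [add_comm] using hd, by simpa [add_comm] using ho⟩
        · obtain ⟨u, v, hd, ho⟩ := pairCase N a4 a2 hx h2
          exact ⟨0, v, 0, u, by simpa [add_comm] using hd, by simpa [add_comm] using ho⟩
      · obtain ⟨u, v, hd, ho⟩ := pairCase N a4 a1 hx h1
        exact ⟨v, 0, 0, u, by simpa [add_comm] using hd, by simpa [add_comm] using ho⟩
end

section
/- Let (N; a₁, a₂, a₃, a₄) be admissible with N even and all aᵢ odd. Then Σ(N; a₁, a₂, a₃, a₄) ≥ 1. -/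
private lemma oddDvd {d a : ℕ} (h : d ∣ a) (ha : Odd a) : Odd d := by
  obtain ⟨k, rfl⟩ := h
  rw [Nat.odd_iff] at *
  rw [Nat.mul_mod] at ha
  rcases Nat.mod_two_eq_zero_or_one d with h | h
  · rw [h] at ha; simp at ha
  · exact h

private lemma dvdHalf {d N M : ℕ} (hN : N = 2 * M) (hd : d ∣ N) (hodd : Odd d) : d ∣ M := by
  have hc : Nat.Coprime d 2 := Nat.coprime_two_right.mpr hodd
  exact hc.dvd_of_dvd_mul_left (by rwa [hN] at hd)

private lemma threeMul {d M : ℕ} (hM : Odd M) (hd : d ∣ M) (hne : d ≠ M) : 3 * d ≤ M := by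
  obtain ⟨k, rfl⟩ := hd
  have hk : Odd k := oddDvd (Dvd.intro_left d rfl) hM
  have hk3 : 3 ≤ k := by
    rcases hk with ⟨m, rfl⟩
    rcases Nat.eq_zero_or_pos m with h | h
    · exfalso; subst h; simp at hne
    · omega
  calc 3 * d = d * 3 := by ring
    _ ≤ d * k := Nat.mul_le_mul_left d hk3

private lemma eEqN {N M x : ℕ} (hN : N = 2 * M) (hM : Odd M) (h2 : 2 ∣ x) (hMx : M ∣ x) :
    Nat.gcd N x = N := by
  have hc : Nat.Coprime 2 M := Nat.coprime_two_left.mpr hM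
  have hNx : N ∣ x := hN ▸ hc.mul_dvd_of_dvd_of_dvd h2 hMx
  exact Nat.dvd_antisymm (Nat.gcd_dvd_left _ _) (Nat.dvd_gcd dvd_rfl hNx)

/-- pure arithmetic: `12M ≤ 4M² + 8` for all naturals. -/
private lemma arithB {M : ℕ} : 12 * M ≤ 4 * M ^ 2 + 8 := by
  rcases Nat.lt_or_ge M 3 with h | h
  · interval_cases M <;> norm_num
  · have h2 : 12 * M ≤ 4 * M * M := by
      calc 12 * M = M * 12 := by ring
        _ ≤ M * (4 * M) := Nat.mul_le_mul_left M (by omega)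
        _ = 4 * M * M := by ring
    nlinarith

/-- pure arithmetic: if `3 ≤ M` then `108M ≤ 24M² + 108`. -/
private lemma arithC {M : ℕ} (h : 3 ≤ M) : 108 * M ≤ 24 * M ^ 2 + 108 := by
  zify
  nlinarith [mul_nonneg (by push_cast; linarith : (0:ℤ) ≤ (M:ℤ) - 3)
    (by push_cast; linarith : (0:ℤ) ≤ 2 * (M:ℤ) - 3)]

/-- pure arithmetic: `12M ≤ 3M² + 12` for all naturals. -/
private lemma arithA {M : ℕ} : 12 * M ≤ 3 * M ^ 2 + 12 := by
  zify
  nlinarith [sq_nonneg ((M:ℤ) - 2)]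

/-- closing inequality when some `e` equals `N = 2M`. -/
private lemma closeB {M d1 d2 d3 d4 e2 e3 e4 : ℕ}
    (h1 : d1 ≤ M) (h2 : d2 ≤ M) (h3 : d3 ≤ M) (h4 : d4 ≤ M)
    (he2 : 2 ≤ e2) (he3 : 2 ≤ e3) (he4 : 2 ≤ e4)
    (hbig : e2 = 2 * M ∨ e3 = 2 * M ∨ e4 = 2 * M) :
    12 * M + (d1 ^ 2 + d2 ^ 2 + d3 ^ 2 + d4 ^ 2) ≤ 4 * M ^ 2 + (e2 ^ 2 + e3 ^ 2 + e4 ^ 2) := by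
  have q1 : d1 ^ 2 ≤ M ^ 2 := Nat.pow_le_pow_left h1 2
  have q2 : d2 ^ 2 ≤ M ^ 2 := Nat.pow_le_pow_left h2 2
  have q3 : d3 ^ 2 ≤ M ^ 2 := Nat.pow_le_pow_left h3 2
  have q4 : d4 ^ 2 ≤ M ^ 2 := Nat.pow_le_pow_left h4 2
  have r2 : 4 ≤ e2 ^ 2 := by calc (4:ℕ) = 2 ^ 2 := by norm_num
                                  _ ≤ e2 ^ 2 := Nat.pow_le_pow_left he2 2
  have r3 : 4 ≤ e3 ^ 2 := by calc (4:ℕ) = 2 ^ 2 := by norm_num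
                                  _ ≤ e3 ^ 2 := Nat.pow_le_pow_left he3 2
  have r4 : 4 ≤ e4 ^ 2 := by calc (4:ℕ) = 2 ^ 2 := by norm_num
                                  _ ≤ e4 ^ 2 := Nat.pow_le_pow_left he4 2
  have hq := @arithB M
  rcases hbig with h | h | h
  · have hsq : e2 ^ 2 = 4 * M ^ 2 := by rw [h]; ring
    linarith
  · have hsq : e3 ^ 2 = 4 * M ^ 2 := by rw [h]; ring
    linarith
  · have hsq : e4 ^ 2 = 4 * M ^ 2 := by rw [h]; ring
    linarith

/-- closing inequality when at least three `dᵢ` satisfy `3dᵢ ≤ M`. -/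
private lemma closeC {M d1 d2 d3 d4 e2 e3 e4 : ℕ}
    (h1 : d1 ≤ M) (h2 : 3 * d2 ≤ M) (h3 : 3 * d3 ≤ M) (h4 : 3 * d4 ≤ M)
    (hd2 : 0 < d2) (he2 : 2 ≤ e2) (he3 : 2 ≤ e3) (he4 : 2 ≤ e4) :
    12 * M + (d1 ^ 2 + d2 ^ 2 + d3 ^ 2 + d4 ^ 2) ≤ 4 * M ^ 2 + (e2 ^ 2 + e3 ^ 2 + e4 ^ 2) := by
  have hM : 3 ≤ M := le_trans (by omega) h2
  have q1 : d1 ^ 2 ≤ M ^ 2 := Nat.pow_le_pow_left h1 2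
  have q2 : 9 * d2 ^ 2 ≤ M ^ 2 := by
    have := Nat.pow_le_pow_left h2 2; nlinarith
  have q3 : 9 * d3 ^ 2 ≤ M ^ 2 := by
    have := Nat.pow_le_pow_left h3 2; nlinarith
  have q4 : 9 * d4 ^ 2 ≤ M ^ 2 := by
    have := Nat.pow_le_pow_left h4 2; nlinarith
  have r2 : 4 ≤ e2 ^ 2 := by calc (4:ℕ) = 2 ^ 2 := by norm_num
                                  _ ≤ e2 ^ 2 := Nat.pow_le_pow_left he2 2
  have r3 : 4 ≤ e3 ^ 2 := by calc (4:ℕ) = 2 ^ 2 := by norm_num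
                                  _ ≤ e3 ^ 2 := Nat.pow_le_pow_left he3 2
  have r4 : 4 ≤ e4 ^ 2 := by calc (4:ℕ) = 2 ^ 2 := by norm_num
                                  _ ≤ e4 ^ 2 := Nat.pow_le_pow_left he4 2
  have hq := arithC hM
  linarith

/-- closing inequality when `M` is even: all `dᵢ` satisfy `2dᵢ ≤ M`. -/
private lemma closeA {M d1 d2 d3 d4 e2 e3 e4 : ℕ}
    (h1 : 2 * d1 ≤ M) (h2 : 2 * d2 ≤ M) (h3 : 2 * d3 ≤ M) (h4 : 2 * d4 ≤ M)
    (he2 : 2 ≤ e2) (he3 : 2 ≤ e3) (he4 : 2 ≤ e4) :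
    12 * M + (d1 ^ 2 + d2 ^ 2 + d3 ^ 2 + d4 ^ 2) ≤ 4 * M ^ 2 + (e2 ^ 2 + e3 ^ 2 + e4 ^ 2) := by
  have q1 : 4 * d1 ^ 2 ≤ M ^ 2 := by have := Nat.pow_le_pow_left h1 2; nlinarith
  have q2 : 4 * d2 ^ 2 ≤ M ^ 2 := by have := Nat.pow_le_pow_left h2 2; nlinarith
  have q3 : 4 * d3 ^ 2 ≤ M ^ 2 := by have := Nat.pow_le_pow_left h3 2; nlinarith
  have q4 : 4 * d4 ^ 2 ≤ M ^ 2 := by have := Nat.pow_le_pow_left h4 2; nlinarith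
  have r2 : 4 ≤ e2 ^ 2 := by calc (4:ℕ) = 2 ^ 2 := by norm_num
                                  _ ≤ e2 ^ 2 := Nat.pow_le_pow_left he2 2
  have r3 : 4 ≤ e3 ^ 2 := by calc (4:ℕ) = 2 ^ 2 := by norm_num
                                  _ ≤ e3 ^ 2 := Nat.pow_le_pow_left he3 2
  have r4 : 4 ≤ e4 ^ 2 := by calc (4:ℕ) = 2 ^ 2 := by norm_num
                                  _ ≤ e4 ^ 2 := Nat.pow_le_pow_left he4 2
  have hq := @arithA M
  linarith

/-- The expression from formula (3.4) of the paper: the sum of the nonnegative Lyapunov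
exponents of the Hodge bundle over the Teichmüller curve of `M_N(a₁,a₂,a₃,a₄)`. -/
noncomputable def sigmaSum (N a1 a2 a3 a4 : ℕ) : ℚ :=
  (N : ℚ) / 6
    - ((Nat.gcd N a1 : ℚ) ^ 2 + (Nat.gcd N a2 : ℚ) ^ 2 +
        (Nat.gcd N a3 : ℚ) ^ 2 + (Nat.gcd N a4 : ℚ) ^ 2) / (6 * N)
    + ((Nat.gcd N (a1 + a2) : ℚ) ^ 2 + (Nat.gcd N (a1 + a3) : ℚ) ^ 2 +
        (Nat.gcd N (a1 + a4) : ℚ) ^ 2) / (6 * N)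

/-- Proof of Theorem 3.4: for admissible parameters with `N` even and all `aᵢ` odd,
the sum of nonnegative Lyapunov exponents `Σ(N; a₁, a₂, a₃, a₄)` is at least `1`. -/
theorem stmt5 (N a1 a2 a3 a4 : ℕ) (hN : 1 < N) (hNeven : Even N)
    (ha1 : 0 < a1) (ha2 : 0 < a2) (ha3 : 0 < a3) (ha4 : 0 < a4)
    (hb1 : a1 ≤ N) (hb2 : a2 ≤ N) (hb3 : a3 ≤ N) (hb4 : a4 ≤ N)
    (hgcd : Nat.gcd (Nat.gcd (Nat.gcd (Nat.gcd N a1) a2) a3) a4 = 1)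
    (hsum : N ∣ a1 + a2 + a3 + a4)
    (ho1 : Odd a1) (ho2 : Odd a2) (ho3 : Odd a3) (ho4 : Odd a4) :
    1 ≤ sigmaSum N a1 a2 a3 a4 := by
  obtain ⟨M, hNM⟩ := hNeven
  have hNM : N = 2 * M := by omega
  have hM0 : 0 < M := by omega
  have hN0 : 0 < N := by omega
  -- main natural-number inequality
  have key : 6 * N + (Nat.gcd N a1 ^ 2 + Nat.gcd N a2 ^ 2 + Nat.gcd N a3 ^ 2 + Nat.gcd N a4 ^ 2)
      ≤ N ^ 2 + (Nat.gcd N (a1 + a2) ^ 2 + Nat.gcd N (a1 + a3) ^ 2 + Nat.gcd N (a1 + a4) ^ 2) := by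
    set d1 := Nat.gcd N a1 with hd1def
    set d2 := Nat.gcd N a2 with hd2def
    set d3 := Nat.gcd N a3 with hd3def
    set d4 := Nat.gcd N a4 with hd4def
    set e2 := Nat.gcd N (a1 + a2) with he2def
    set e3 := Nat.gcd N (a1 + a3) with he3def
    set e4 := Nat.gcd N (a1 + a4) with he4def
    have hod1 : Odd d1 := oddDvd (Nat.gcd_dvd_right _ _) ho1
    have hod2 : Odd d2 := oddDvd (Nat.gcd_dvd_right _ _) ho2
    have hod3 : Odd d3 := oddDvd (Nat.gcd_dvd_right _ _) ho3
    have hod4 : Odd d4 := oddDvd (Nat.gcd_dvd_right _ _) ho4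
    have hdM1 : d1 ∣ M := dvdHalf hNM (Nat.gcd_dvd_left _ _) hod1
    have hdM2 : d2 ∣ M := dvdHalf hNM (Nat.gcd_dvd_left _ _) hod2
    have hdM3 : d3 ∣ M := dvdHalf hNM (Nat.gcd_dvd_left _ _) hod3
    have hdM4 : d4 ∣ M := dvdHalf hNM (Nat.gcd_dvd_left _ _) hod4
    have hle1 : d1 ≤ M := Nat.le_of_dvd hM0 hdM1
    have hle2 : d2 ≤ M := Nat.le_of_dvd hM0 hdM2
    have hle3 : d3 ≤ M := Nat.le_of_dvd hM0 hdM3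
    have hle4 : d4 ≤ M := Nat.le_of_dvd hM0 hdM4
    have hd1pos : 0 < d1 := Nat.gcd_pos_of_pos_left _ hN0
    have hd2pos : 0 < d2 := Nat.gcd_pos_of_pos_left _ hN0
    have h2N : 2 ∣ N := ⟨M, hNM⟩
    have he2ge : 2 ≤ e2 := Nat.le_of_dvd (Nat.gcd_pos_of_pos_left _ hN0)
      (Nat.dvd_gcd h2N (ho1.add_odd ho2).two_dvd)
    have he3ge : 2 ≤ e3 := Nat.le_of_dvd (Nat.gcd_pos_of_pos_left _ hN0)
      (Nat.dvd_gcd h2N (ho1.add_odd ho3).two_dvd)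
    have he4ge : 2 ≤ e4 := Nat.le_of_dvd (Nat.gcd_pos_of_pos_left _ hN0)
      (Nat.dvd_gcd h2N (ho1.add_odd ho4).two_dvd)
    have hgoal : 12 * M + (d1 ^ 2 + d2 ^ 2 + d3 ^ 2 + d4 ^ 2)
        ≤ 4 * M ^ 2 + (e2 ^ 2 + e3 ^ 2 + e4 ^ 2) → 6 * N + (d1 ^ 2 + d2 ^ 2 + d3 ^ 2 + d4 ^ 2)
        ≤ N ^ 2 + (e2 ^ 2 + e3 ^ 2 + e4 ^ 2) := by
      intro h
      have hNsq : N ^ 2 = 4 * M ^ 2 := by rw [hNM]; ring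
      have h6N : 6 * N = 12 * M := by rw [hNM]; ring
      linarith
    apply hgoal
    rcases Nat.even_or_odd M with hMev | hModd
    · -- M even: each d divides M/2, so 2d ≤ M
      obtain ⟨M', hM'⟩ := hMev
      have hM' : M = 2 * M' := by omega
      have hM'0 : 0 < M' := by omega
      have t1 : 2 * d1 ≤ M := by
        have := Nat.le_of_dvd hM'0 (dvdHalf hM' hdM1 hod1); omega
      have t2 : 2 * d2 ≤ M := by
        have := Nat.le_of_dvd hM'0 (dvdHalf hM' hdM2 hod2); omega
      have t3 : 2 * d3 ≤ M := by
        have := Nat.le_of_dvd hM'0 (dvdHalf hM' hdM3 hod3); omega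
      have t4 : 2 * d4 ≤ M := by
        have := Nat.le_of_dvd hM'0 (dvdHalf hM' hdM4 hod4); omega
      exact closeA t1 t2 t3 t4 he2ge he3ge he4ge
    · -- M odd
      have hMsum : M ∣ a1 + a2 + a3 + a4 := dvd_trans ⟨2, by omega⟩ hsum
      have pair12 : d1 = M → d2 = M → e2 = 2 * M := by
        intro p1 p2
        have hx : M ∣ a1 + a2 :=
          Nat.dvd_add (p1 ▸ Nat.gcd_dvd_right N a1) (p2 ▸ Nat.gcd_dvd_right N a2)
        rw [he2def, eEqN hNM hModd (ho1.add_odd ho2).two_dvd hx]; omega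
      have pair13 : d1 = M → d3 = M → e3 = 2 * M := by
        intro p1 p3
        have hx : M ∣ a1 + a3 :=
          Nat.dvd_add (p1 ▸ Nat.gcd_dvd_right N a1) (p3 ▸ Nat.gcd_dvd_right N a3)
        rw [he3def, eEqN hNM hModd (ho1.add_odd ho3).two_dvd hx]; omega
      have pair14 : d1 = M → d4 = M → e4 = 2 * M := by
        intro p1 p4
        have hx : M ∣ a1 + a4 :=
          Nat.dvd_add (p1 ▸ Nat.gcd_dvd_right N a1) (p4 ▸ Nat.gcd_dvd_right N a4)
        rw [he4def, eEqN hNM hModd (ho1.add_odd ho4).two_dvd hx]; omega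
      have pair34 : d3 = M → d4 = M → e2 = 2 * M := by
        intro p3 p4
        have h34 : M ∣ a3 + a4 :=
          Nat.dvd_add (p3 ▸ Nat.gcd_dvd_right N a3) (p4 ▸ Nat.gcd_dvd_right N a4)
        have hx : M ∣ a1 + a2 := by
          have := Nat.dvd_sub hMsum h34
          simpa [show a1 + a2 + a3 + a4 - (a3 + a4) = a1 + a2 by omega] using this
        rw [he2def, eEqN hNM hModd (ho1.add_odd ho2).two_dvd hx]; omega
      have pair24 : d2 = M → d4 = M → e3 = 2 * M := by
        intro p2 p4
        have h24 : M ∣ a2 + a4 :=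
          Nat.dvd_add (p2 ▸ Nat.gcd_dvd_right N a2) (p4 ▸ Nat.gcd_dvd_right N a4)
        have hx : M ∣ a1 + a3 := by
          have := Nat.dvd_sub hMsum h24
          simpa [show a1 + a2 + a3 + a4 - (a2 + a4) = a1 + a3 by omega] using this
        rw [he3def, eEqN hNM hModd (ho1.add_odd ho3).two_dvd hx]; omega
      have pair23 : d2 = M → d3 = M → e4 = 2 * M := by
        intro p2 p3
        have h23 : M ∣ a2 + a3 :=
          Nat.dvd_add (p2 ▸ Nat.gcd_dvd_right N a2) (p3 ▸ Nat.gcd_dvd_right N a3)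
        have hx : M ∣ a1 + a4 := by
          have := Nat.dvd_sub hMsum h23
          simpa [show a1 + a2 + a3 + a4 - (a2 + a3) = a1 + a4 by omega] using this
        rw [he4def, eEqN hNM hModd (ho1.add_odd ho4).two_dvd hx]; omega
      by_cases h1 : d1 = M
      · by_cases h2 : d2 = M
        · exact closeB hle1 hle2 hle3 hle4 he2ge he3ge he4ge (Or.inl (pair12 h1 h2))
        · by_cases h3 : d3 = M
          · exact closeB hle1 hle2 hle3 hle4 he2ge he3ge he4ge (Or.inr (Or.inl (pair13 h1 h3)))
          · by_cases h4 : d4 = M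
            · exact closeB hle1 hle2 hle3 hle4 he2ge he3ge he4ge
                (Or.inr (Or.inr (pair14 h1 h4)))
            · have := closeC hle1 (threeMul hModd hdM2 h2) (threeMul hModd hdM3 h3)
                (threeMul hModd hdM4 h4) hd2pos he2ge he3ge he4ge
              linarith
      · by_cases h2 : d2 = M
        · by_cases h3 : d3 = M
          · exact closeB hle1 hle2 hle3 hle4 he2ge he3ge he4ge
              (Or.inr (Or.inr (pair23 h2 h3)))
          · by_cases h4 : d4 = M
            · exact closeB hle1 hle2 hle3 hle4 he2ge he3ge he4ge
                (Or.inr (Or.inl (pair24 h2 h4)))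
            · have := closeC hle2 (threeMul hModd hdM1 h1) (threeMul hModd hdM3 h3)
                (threeMul hModd hdM4 h4) hd1pos he2ge he3ge he4ge
              linarith
        · by_cases h3 : d3 = M
          · by_cases h4 : d4 = M
            · exact closeB hle1 hle2 hle3 hle4 he2ge he3ge he4ge (Or.inl (pair34 h3 h4))
            · have := closeC hle3 (threeMul hModd hdM1 h1) (threeMul hModd hdM2 h2)
                (threeMul hModd hdM4 h4) hd1pos he2ge he3ge he4ge
              linarith
          · by_cases h4 : d4 = M
            · have := closeC hle4 (threeMul hModd hdM1 h1) (threeMul hModd hdM2 h2)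
                (threeMul hModd hdM3 h3) hd1pos he2ge he3ge he4ge
              linarith
            · have := closeC hle1 (threeMul hModd hdM2 h2) (threeMul hModd hdM3 h3)
                (threeMul hModd hdM4 h4) hd2pos he2ge he3ge he4ge
              linarith
  -- convert to the rational statement
  have hNQ : (0 : ℚ) < (N : ℚ) := by exact_mod_cast hN0
  have key' : 6 * (N:ℚ) + ((Nat.gcd N a1 : ℚ) ^ 2 + (Nat.gcd N a2 : ℚ) ^ 2 +
        (Nat.gcd N a3 : ℚ) ^ 2 + (Nat.gcd N a4 : ℚ) ^ 2)
      ≤ (N:ℚ) ^ 2 + ((Nat.gcd N (a1 + a2) : ℚ) ^ 2 + (Nat.gcd N (a1 + a3) : ℚ) ^ 2 +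
        (Nat.gcd N (a1 + a4) : ℚ) ^ 2) := by exact_mod_cast key
  have heq : sigmaSum N a1 a2 a3 a4 =
      ((N:ℚ) ^ 2 - ((Nat.gcd N a1 : ℚ) ^ 2 + (Nat.gcd N a2 : ℚ) ^ 2 +
        (Nat.gcd N a3 : ℚ) ^ 2 + (Nat.gcd N a4 : ℚ) ^ 2)
      + ((Nat.gcd N (a1 + a2) : ℚ) ^ 2 + (Nat.gcd N (a1 + a3) : ℚ) ^ 2 +
        (Nat.gcd N (a1 + a4) : ℚ) ^ 2)) / (6 * N) := by
    unfold sigmaSum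
    field_simp
  rw [heq, le_div_iff₀ (by positivity)]
  linarith
end

section
/- Let (N; a₁, a₂, a₃, a₄) be admissible with N even and all aᵢ odd. Then Σ(N; a₁, a₂, a₃, a₄) = 1 if and only if (N, (a₁,a₂,a₃,a₄)) is, up to a permutation of the aᵢ, one of the following: (2, (1,1,1,1)), (4, (1,1,1,1)), (4, (3,3,3,3)), (6, (1,1,1,3)), (6, (5,5,5,3)). For all other such admissible parameters one has Σ(N; a₁,a₂,a₃,a₄) > 1. -/
def Good (N a1 a2 a3 a4 : ℕ) : Prop :=
  ((N = 2 ∧ ({a1, a2, a3, a4} : Multiset ℕ) = {1, 1, 1, 1}) ∨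
   (N = 4 ∧ ({a1, a2, a3, a4} : Multiset ℕ) = {1, 1, 1, 1}) ∨
   (N = 4 ∧ ({a1, a2, a3, a4} : Multiset ℕ) = {3, 3, 3, 3}) ∨
   (N = 6 ∧ ({a1, a2, a3, a4} : Multiset ℕ) = {1, 1, 1, 3}) ∨
   (N = 6 ∧ ({a1, a2, a3, a4} : Multiset ℕ) = {5, 5, 5, 3}))

instance GoodDec : ∀ N a1 a2 a3 a4, Decidable (Good N a1 a2 a3 a4) := by
  intros; unfold Good; infer_instance

def Cond (N a1 a2 a3 a4 : ℕ) : Prop :=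
  a1 ≤ N ∧ a2 ≤ N ∧ a3 ≤ N ∧ a4 ≤ N ∧
  Nat.gcd (Nat.gcd (Nat.gcd (Nat.gcd N a1) a2) a3) a4 = 1 ∧
  (a1 + a2 + a3 + a4) % N = 0

instance CondDec : ∀ N a1 a2 a3 a4, Decidable (Cond N a1 a2 a3 a4) := by
  intros; unfold Cond; infer_instance

def Concl (N a1 a2 a3 a4 : ℕ) : Prop :=
  (N^2 + ((Nat.gcd N (a1+a2))^2 + (Nat.gcd N (a1+a3))^2 + (Nat.gcd N (a1+a4))^2)
      = 6*N + ((Nat.gcd N a1)^2 + (Nat.gcd N a2)^2 + (Nat.gcd N a3)^2 + (Nat.gcd N a4)^2)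
    ↔ Good N a1 a2 a3 a4) ∧
   (¬ Good N a1 a2 a3 a4 →
     6*N + ((Nat.gcd N a1)^2 + (Nat.gcd N a2)^2 + (Nat.gcd N a3)^2 + (Nat.gcd N a4)^2)
       < N^2 + ((Nat.gcd N (a1+a2))^2 + (Nat.gcd N (a1+a3))^2 + (Nat.gcd N (a1+a4))^2))

instance ConclDec : ∀ N a1 a2 a3 a4, Decidable (Concl N a1 a2 a3 a4) := by
  intros; unfold Concl; infer_instance

set_option maxHeartbeats 1000000 in
set_option maxRecDepth 100000 in
lemma fin8 : ∀ b1 < 4, ∀ b2 < 4, ∀ b3 < 4, ∀ b4 < 4,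
    Cond 8 (2*b1+1) (2*b2+1) (2*b3+1) (2*b4+1) →
    Concl 8 (2*b1+1) (2*b2+1) (2*b3+1) (2*b4+1) := by decide

set_option maxHeartbeats 1000000 in
set_option maxRecDepth 100000 in
lemma fin6 : ∀ b1 < 3, ∀ b2 < 3, ∀ b3 < 3, ∀ b4 < 3,
    Cond 6 (2*b1+1) (2*b2+1) (2*b3+1) (2*b4+1) →
    Concl 6 (2*b1+1) (2*b2+1) (2*b3+1) (2*b4+1) := by decide

set_option maxHeartbeats 1000000 in
set_option maxRecDepth 100000 in
lemma fin4 : ∀ b1 < 2, ∀ b2 < 2, ∀ b3 < 2, ∀ b4 < 2,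
    Cond 4 (2*b1+1) (2*b2+1) (2*b3+1) (2*b4+1) →
    Concl 4 (2*b1+1) (2*b2+1) (2*b3+1) (2*b4+1) := by decide

set_option maxHeartbeats 1000000 in
lemma fin2 : ∀ b1 < 1, ∀ b2 < 1, ∀ b3 < 1, ∀ b4 < 1,
    Cond 2 (2*b1+1) (2*b2+1) (2*b3+1) (2*b4+1) →
    Concl 2 (2*b1+1) (2*b2+1) (2*b3+1) (2*b4+1) := by decide

lemma bridge (N a1 a2 a3 a4 : ℕ) (hN : 0 < N) :
    (sigmaSum N a1 a2 a3 a4 = 1 ↔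
      N^2 + ((Nat.gcd N (a1+a2))^2 + (Nat.gcd N (a1+a3))^2 + (Nat.gcd N (a1+a4))^2)
        = 6*N + ((Nat.gcd N a1)^2 + (Nat.gcd N a2)^2 + (Nat.gcd N a3)^2 + (Nat.gcd N a4)^2)) ∧
    (1 < sigmaSum N a1 a2 a3 a4 ↔
      6*N + ((Nat.gcd N a1)^2 + (Nat.gcd N a2)^2 + (Nat.gcd N a3)^2 + (Nat.gcd N a4)^2)
        < N^2 + ((Nat.gcd N (a1+a2))^2 + (Nat.gcd N (a1+a3))^2 + (Nat.gcd N (a1+a4))^2)) := by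
  have hQ : (0:ℚ) < (N:ℚ) := by exact_mod_cast hN
  have hNne : (N:ℚ) ≠ 0 := ne_of_gt hQ
  have h6 : (0:ℚ) < 6*(N:ℚ) := by linarith
  set L : ℚ := ((N^2 + ((Nat.gcd N (a1+a2))^2 + (Nat.gcd N (a1+a3))^2 + (Nat.gcd N (a1+a4))^2) : ℕ) : ℚ) with hL
  set R : ℚ := ((6*N + ((Nat.gcd N a1)^2 + (Nat.gcd N a2)^2 + (Nat.gcd N a3)^2 + (Nat.gcd N a4)^2) : ℕ) : ℚ) with hR
  have key : sigmaSum N a1 a2 a3 a4 = (L - R) / (6*(N:ℚ)) + 1 := by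
    rw [hL, hR]
    unfold sigmaSum
    push_cast
    field_simp
    ring
  constructor
  · rw [key]
    constructor
    · intro h
      have h2 : (L - R)/(6*(N:ℚ)) = 0 := by linarith
      have h3 : L - R = 0 := by
        rcases (div_eq_zero_iff).mp h2 with h3 | h3
        · exact h3
        · exact absurd h3 (ne_of_gt h6)
      have h4 : L = R := by linarith
      rw [hL, hR] at h4
      exact_mod_cast h4
    · intro h
      have h4 : L = R := by rw [hL, hR]; exact_mod_cast h
      rw [h4]
      simp
  · rw [key]
    constructor
    · intro h
      have h2 : 0 < (L - R)/(6*(N:ℚ)) := by linarith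
      have h3 : 0 < L - R := by
        by_contra hcon
        push_neg at hcon
        have : (L - R)/(6*(N:ℚ)) ≤ 0 := div_nonpos_of_nonpos_of_nonneg hcon (le_of_lt h6)
        linarith
      have h4 : R < L := by linarith
      rw [hL, hR] at h4
      exact_mod_cast h4
    · intro h
      have h4 : R < L := by rw [hL, hR]; exact_mod_cast h
      have : 0 < (L - R)/(6*(N:ℚ)) := div_pos (by linarith) h6
      linarith

lemma two_dvd_le {d k : ℕ} (hk : 0 < k) (h : d ∣ k) (hne : d ≠ k) : 2*d ≤ k := by
  obtain ⟨m, rfl⟩ := h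
  rcases m with _ | _ | m
  · omega
  · omega
  · nlinarith

lemma ineqA (k d1 d2 d3 d4 e2 e3 e4 : ℕ) (hk : 5 ≤ k)
    (h1 : d1 ≤ k) (h2 : 2*d2 ≤ k) (h3 : 2*d3 ≤ k) (h4 : 2*d4 ≤ k)
    (g2 : 2 ≤ e2) (g3 : 2 ≤ e3) (g4 : 2 ≤ e4) :
    6*(2*k) + (d1^2+d2^2+d3^2+d4^2) < (2*k)^2 + (e2^2+e3^2+e4^2) := by
  nlinarith [sq_nonneg k, mul_le_mul h1 h1 (Nat.zero_le _) (Nat.zero_le _),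
    mul_le_mul h2 h2 (Nat.zero_le _) (Nat.zero_le _),
    mul_le_mul h3 h3 (Nat.zero_le _) (Nat.zero_le _),
    mul_le_mul h4 h4 (Nat.zero_le _) (Nat.zero_le _),
    mul_le_mul g2 g2 (Nat.zero_le _) (Nat.zero_le _),
    mul_le_mul g3 g3 (Nat.zero_le _) (Nat.zero_le _),
    mul_le_mul g4 g4 (Nat.zero_le _) (Nat.zero_le _),
    mul_le_mul hk hk (Nat.zero_le _) (Nat.zero_le _)]

lemma ineqB (k d1 d2 d3 d4 e2 e3 e4 : ℕ) (hk : 5 ≤ k)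
    (h1 : d1 ≤ k) (h2 : d2 ≤ k) (h3 : d3 ≤ k) (h4 : d4 ≤ k)
    (g2 : e2 = 2*k) (g3 : 2 ≤ e3) (g4 : 2 ≤ e4) :
    6*(2*k) + (d1^2+d2^2+d3^2+d4^2) < (2*k)^2 + (e2^2+e3^2+e4^2) := by
  subst g2
  nlinarith [mul_le_mul h1 h1 (Nat.zero_le _) (Nat.zero_le _),
    mul_le_mul h2 h2 (Nat.zero_le _) (Nat.zero_le _),
    mul_le_mul h3 h3 (Nat.zero_le _) (Nat.zero_le _),
    mul_le_mul h4 h4 (Nat.zero_le _) (Nat.zero_le _),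
    mul_le_mul hk hk (Nat.zero_le _) (Nat.zero_le _)]

set_option maxHeartbeats 2000000 in
lemma bigN (N a1 a2 a3 a4 : ℕ) (h10 : 10 ≤ N) (hNeven : Even N)
    (hsum : N ∣ a1 + a2 + a3 + a4)
    (ho1 : Odd a1) (ho2 : Odd a2) (ho3 : Odd a3) (ho4 : Odd a4) :
    6*N + ((Nat.gcd N a1)^2 + (Nat.gcd N a2)^2 + (Nat.gcd N a3)^2 + (Nat.gcd N a4)^2)
      < N^2 + ((Nat.gcd N (a1+a2))^2 + (Nat.gcd N (a1+a3))^2 + (Nat.gcd N (a1+a4))^2) := by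
  obtain ⟨k, hkk⟩ := hNeven
  have hN2k : N = 2*k := by omega
  have hk5 : 5 ≤ k := by omega
  have hk0 : 0 < k := by omega
  have hN0 : 0 < N := by omega
  set d1 := Nat.gcd N a1 with hd1def
  set d2 := Nat.gcd N a2 with hd2def
  set d3 := Nat.gcd N a3 with hd3def
  set d4 := Nat.gcd N a4 with hd4def
  set e2 := Nat.gcd N (a1+a2) with he2def
  set e3 := Nat.gcd N (a1+a3) with he3def
  set e4 := Nat.gcd N (a1+a4) with he4def
  -- oddness of d's
  have hm1 : a1 % 2 = 1 := Nat.odd_iff.mp ho1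
  have hm2 : a2 % 2 = 1 := Nat.odd_iff.mp ho2
  have hm3 : a3 % 2 = 1 := Nat.odd_iff.mp ho3
  have hm4 : a4 % 2 = 1 := Nat.odd_iff.mp ho4
  have hodd : ∀ a, a % 2 = 1 → Odd (Nat.gcd N a) := by
    intro a ha
    rw [Nat.odd_iff]
    rcases Nat.even_or_odd (Nat.gcd N a) with he | ho
    · exfalso
      have h2 : 2 ∣ Nat.gcd N a := even_iff_two_dvd.mp he
      have : 2 ∣ a := h2.trans (Nat.gcd_dvd_right N a)
      omega
    · exact Nat.odd_iff.mp ho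
  have hcop : ∀ a, a % 2 = 1 → Nat.gcd N a ∣ k := by
    intro a ha
    have hdvd : Nat.gcd N a ∣ k * 2 := by
      rw [mul_comm, ← hN2k]; exact Nat.gcd_dvd_left N a
    have hco : Nat.Coprime (Nat.gcd N a) 2 := by
      have hnd : ¬ 2 ∣ Nat.gcd N a := by
        intro h2
        have : 2 ∣ a := h2.trans (Nat.gcd_dvd_right N a)
        omega
      exact Nat.Coprime.symm ((Nat.prime_two.coprime_iff_not_dvd).mpr hnd)
    exact (Nat.Coprime.dvd_of_dvd_mul_right hco hdvd)
  have hd1k : d1 ∣ k := hcop a1 hm1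
  have hd2k : d2 ∣ k := hcop a2 hm2
  have hd3k : d3 ∣ k := hcop a3 hm3
  have hd4k : d4 ∣ k := hcop a4 hm4
  have hd1 : d1 ≤ k := Nat.le_of_dvd hk0 hd1k
  have hd2 : d2 ≤ k := Nat.le_of_dvd hk0 hd2k
  have hd3 : d3 ≤ k := Nat.le_of_dvd hk0 hd3k
  have hd4 : d4 ≤ k := Nat.le_of_dvd hk0 hd4k
  have hepos : ∀ b, 0 < b → b % 2 = 0 → 2 ≤ Nat.gcd N b := by
    intro b hb hbm
    refine Nat.le_of_dvd (Nat.gcd_pos_of_pos_right _ hb) ?_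
    exact Nat.dvd_gcd (by omega) (by omega)
  have g2 : 2 ≤ e2 := hepos (a1+a2) (by omega) (by omega)
  have g3 : 2 ≤ e3 := hepos (a1+a3) (by omega) (by omega)
  have g4 : 2 ≤ e4 := hepos (a1+a4) (by omega) (by omega)
  -- the key lemma: a full pair forces e = N
  have hfull : ∀ x y, x % 2 = 1 → y % 2 = 1 → k ∣ x → k ∣ y → N ∣ x + y := by
    intro x y hx hy hkx hky
    have hkodd : Odd k := by
      rcases Nat.even_or_odd k with he | ho
      · exfalso
        have h2k : 2 ∣ k := even_iff_two_dvd.mp he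
        have : 2 ∣ x := h2k.trans hkx
        omega
      · exact ho
    have h2xy : 2 ∣ x + y := by omega
    have hkxy : k ∣ x + y := Nat.dvd_add hkx hky
    have : 2 * k ∣ x + y := Nat.Coprime.mul_dvd_of_dvd_of_dvd
      ((Nat.prime_two.coprime_iff_not_dvd).mpr (by rw [Nat.odd_iff] at hkodd; omega)) h2xy hkxy
    rwa [← hN2k] at this
  have hE2 : (d1 = k ∧ d2 = k) ∨ (d3 = k ∧ d4 = k) → e2 = N := by
    rintro (⟨h1, h2⟩ | ⟨h3, h4⟩)
    · have : N ∣ a1 + a2 := hfull a1 a2 hm1 hm2 (h1 ▸ Nat.gcd_dvd_right N a1) (h2 ▸ Nat.gcd_dvd_right N a2)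
      rw [he2def]; exact Nat.gcd_eq_left this
    · have h34 : N ∣ a3 + a4 := hfull a3 a4 hm3 hm4 (h3 ▸ Nat.gcd_dvd_right N a3) (h4 ▸ Nat.gcd_dvd_right N a4)
      have h12 : N ∣ a1 + a2 := by
        have := Nat.dvd_sub hsum h34
        have heq : a1 + a2 + a3 + a4 - (a3 + a4) = a1 + a2 := by omega
        rwa [heq] at this
      rw [he2def]; exact Nat.gcd_eq_left h12
  have hE3 : (d1 = k ∧ d3 = k) ∨ (d2 = k ∧ d4 = k) → e3 = N := by
    rintro (⟨h1, h3⟩ | ⟨h2, h4⟩)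
    · have : N ∣ a1 + a3 := hfull a1 a3 hm1 hm3 (h1 ▸ Nat.gcd_dvd_right N a1) (h3 ▸ Nat.gcd_dvd_right N a3)
      rw [he3def]; exact Nat.gcd_eq_left this
    · have h24 : N ∣ a2 + a4 := hfull a2 a4 hm2 hm4 (h2 ▸ Nat.gcd_dvd_right N a2) (h4 ▸ Nat.gcd_dvd_right N a4)
      have h13 : N ∣ a1 + a3 := by
        have := Nat.dvd_sub hsum h24
        have heq : a1 + a2 + a3 + a4 - (a2 + a4) = a1 + a3 := by omega
        rwa [heq] at this
      rw [he3def]; exact Nat.gcd_eq_left h13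
  have hE4 : (d1 = k ∧ d4 = k) ∨ (d2 = k ∧ d3 = k) → e4 = N := by
    rintro (⟨h1, h4⟩ | ⟨h2, h3⟩)
    · have : N ∣ a1 + a4 := hfull a1 a4 hm1 hm4 (h1 ▸ Nat.gcd_dvd_right N a1) (h4 ▸ Nat.gcd_dvd_right N a4)
      rw [he4def]; exact Nat.gcd_eq_left this
    · have h23 : N ∣ a2 + a3 := hfull a2 a3 hm2 hm3 (h2 ▸ Nat.gcd_dvd_right N a2) (h3 ▸ Nat.gcd_dvd_right N a3)
      have h14 : N ∣ a1 + a4 := by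
        have := Nat.dvd_sub hsum h23
        have heq : a1 + a2 + a3 + a4 - (a2 + a3) = a1 + a4 := by omega
        rwa [heq] at this
      rw [he4def]; exact Nat.gcd_eq_left h14
  have hc1 : 2*d1 ≤ k ∨ d1 = k := by
    by_cases h : d1 = k
    · exact Or.inr h
    · exact Or.inl (two_dvd_le hk0 hd1k h)
  have hc2 : 2*d2 ≤ k ∨ d2 = k := by
    by_cases h : d2 = k
    · exact Or.inr h
    · exact Or.inl (two_dvd_le hk0 hd2k h)
  have hc3 : 2*d3 ≤ k ∨ d3 = k := by
    by_cases h : d3 = k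
    · exact Or.inr h
    · exact Or.inl (two_dvd_le hk0 hd3k h)
  have hc4 : 2*d4 ≤ k ∨ d4 = k := by
    by_cases h : d4 = k
    · exact Or.inr h
    · exact Or.inl (two_dvd_le hk0 hd4k h)
  rw [hN2k]
  rcases hc1 with h1 | h1 <;> rcases hc2 with h2 | h2 <;>
    rcases hc3 with h3 | h3 <;> rcases hc4 with h4 | h4 <;>
  first
    | (exact ineqA k d1 d2 d3 d4 e2 e3 e4 hk5 hd1 h2 h3 h4 g2 g3 g4)
    | (linarith [ineqA k d2 d1 d3 d4 e2 e3 e4 hk5 hd2 h1 h3 h4 g2 g3 g4])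
    | (linarith [ineqA k d3 d1 d2 d4 e2 e3 e4 hk5 hd3 h1 h2 h4 g2 g3 g4])
    | (linarith [ineqA k d4 d1 d2 d3 e2 e3 e4 hk5 hd4 h1 h2 h3 g2 g3 g4])
    | (have hE : e2 = 2*k := (hE2 (by omega)).trans hN2k
       exact ineqB k d1 d2 d3 d4 e2 e3 e4 hk5 hd1 hd2 hd3 hd4 hE g3 g4)
    | (have hE : e3 = 2*k := (hE3 (by omega)).trans hN2k
       linarith [ineqB k d1 d2 d3 d4 e3 e2 e4 hk5 hd1 hd2 hd3 hd4 hE g2 g4])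
    | (have hE : e4 = 2*k := (hE4 (by omega)).trans hN2k
       linarith [ineqB k d1 d2 d3 d4 e4 e2 e3 hk5 hd1 hd2 hd3 hd4 hE g2 g3])

/-- Arithmetic content of Theorem 3.4: for admissible parameters with `N` even and all
`aᵢ` odd, `Σ(N; a₁,a₂,a₃,a₄) = 1` exactly for the listed parameters (up to permutation
of the `aᵢ`), and `Σ > 1` for all other such parameters. -/
theorem stmt6 (N a1 a2 a3 a4 : ℕ) (hN : 1 < N) (hNeven : Even N)
    (ha1 : 0 < a1) (ha2 : 0 < a2) (ha3 : 0 < a3) (ha4 : 0 < a4)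
    (hb1 : a1 ≤ N) (hb2 : a2 ≤ N) (hb3 : a3 ≤ N) (hb4 : a4 ≤ N)
    (hgcd : Nat.gcd (Nat.gcd (Nat.gcd (Nat.gcd N a1) a2) a3) a4 = 1)
    (hsum : N ∣ a1 + a2 + a3 + a4)
    (ho1 : Odd a1) (ho2 : Odd a2) (ho3 : Odd a3) (ho4 : Odd a4) :
    (sigmaSum N a1 a2 a3 a4 = 1 ↔
      ((N = 2 ∧ ({a1, a2, a3, a4} : Multiset ℕ) = {1, 1, 1, 1}) ∨
       (N = 4 ∧ ({a1, a2, a3, a4} : Multiset ℕ) = {1, 1, 1, 1}) ∨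
       (N = 4 ∧ ({a1, a2, a3, a4} : Multiset ℕ) = {3, 3, 3, 3}) ∨
       (N = 6 ∧ ({a1, a2, a3, a4} : Multiset ℕ) = {1, 1, 1, 3}) ∨
       (N = 6 ∧ ({a1, a2, a3, a4} : Multiset ℕ) = {5, 5, 5, 3}))) ∧
    (¬ ((N = 2 ∧ ({a1, a2, a3, a4} : Multiset ℕ) = {1, 1, 1, 1}) ∨
        (N = 4 ∧ ({a1, a2, a3, a4} : Multiset ℕ) = {1, 1, 1, 1}) ∨
        (N = 4 ∧ ({a1, a2, a3, a4} : Multiset ℕ) = {3, 3, 3, 3}) ∨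
        (N = 6 ∧ ({a1, a2, a3, a4} : Multiset ℕ) = {1, 1, 1, 3}) ∨
        (N = 6 ∧ ({a1, a2, a3, a4} : Multiset ℕ) = {5, 5, 5, 3})) →
      1 < sigmaSum N a1 a2 a3 a4) := by
  have hN0 : 0 < N := by omega
  obtain ⟨Leq, Llt⟩ := bridge N a1 a2 a3 a4 hN0
  by_cases hsmall : N ≤ 8
  · obtain ⟨b1, hB1⟩ := ho1
    obtain ⟨b2, hB2⟩ := ho2
    obtain ⟨b3, hB3⟩ := ho3
    obtain ⟨b4, hB4⟩ := ho4
    have hmod : (a1 + a2 + a3 + a4) % N = 0 := by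
      obtain ⟨c, hc⟩ := hsum; rw [hc]; exact Nat.mul_mod_right N c
    have hcond : Cond N a1 a2 a3 a4 := ⟨hb1, hb2, hb3, hb4, hgcd, hmod⟩
    have hNc : N = 2 ∨ N = 4 ∨ N = 6 ∨ N = 8 := by
      obtain ⟨c, hc⟩ := hNeven; omega
    have key : Concl N a1 a2 a3 a4 := by
      subst hB1; subst hB2; subst hB3; subst hB4
      rcases hNc with rfl | rfl | rfl | rfl
      · exact fin2 b1 (by omega) b2 (by omega) b3 (by omega) b4 (by omega) hcond
      · exact fin4 b1 (by omega) b2 (by omega) b3 (by omega) b4 (by omega) hcond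
      · exact fin6 b1 (by omega) b2 (by omega) b3 (by omega) b4 (by omega) hcond
      · exact fin8 b1 (by omega) b2 (by omega) b3 (by omega) b4 (by omega) hcond
    obtain ⟨keq, klt⟩ := key
    constructor
    · rw [Leq]
      exact keq
    · intro hng
      rw [Llt]
      exact klt hng
  · push_neg at hsmall
    have h10 : 10 ≤ N := by
      obtain ⟨c, hc⟩ := hNeven; omega
    have hlt := bigN N a1 a2 a3 a4 h10 hNeven hsum ho1 ho2 ho3 ho4
    have hσ : 1 < sigmaSum N a1 a2 a3 a4 := Llt.mpr hlt
    constructor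
    · constructor
      · intro h
        exact absurd h.symm (ne_of_lt hσ)
      · rintro (⟨h, -⟩ | ⟨h, -⟩ | ⟨h, -⟩ | ⟨h, -⟩ | ⟨h, -⟩) <;> omega
    · intro _
      exact hσ
end

section
/- Let (N; a₁, a₂, a₃, a₄) be admissible and suppose aᵢ = N for at least one index i. Then Σ(N; a₁, a₂, a₃, a₄) = 0. -/
/-- If `N ∣ x + y` then `gcd N x = gcd N y`. -/
lemma gcd_compl {N x y : ℕ} (h : N ∣ x + y) : Nat.gcd N x = Nat.gcd N y := by
  apply Nat.dvd_antisymm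
  · apply Nat.dvd_gcd (Nat.gcd_dvd_left _ _)
    have h1 : Nat.gcd N x ∣ x + y := (Nat.gcd_dvd_left N x).trans h
    have := Nat.dvd_sub h1 (Nat.gcd_dvd_right N x)
    simpa using this
  · apply Nat.dvd_gcd (Nat.gcd_dvd_left _ _)
    have h1 : Nat.gcd N y ∣ x + y := (Nat.gcd_dvd_left N y).trans h
    have := Nat.dvd_sub h1 (Nat.gcd_dvd_right N y)
    simpa using this

/-- Theorem 3.9 of the paper: for admissible parameters with `aᵢ = N` for at least one
index `i`, the sum `Σ(N; a₁,a₂,a₃,a₄)` of the nonnegative Lyapunov exponents of `H¹₊`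
vanishes. -/
theorem stmt7 (N a1 a2 a3 a4 : ℕ) (hN : 1 < N)
    (ha1 : 0 < a1) (ha2 : 0 < a2) (ha3 : 0 < a3) (ha4 : 0 < a4)
    (hb1 : a1 ≤ N) (hb2 : a2 ≤ N) (hb3 : a3 ≤ N) (hb4 : a4 ≤ N)
    (hgcd : Nat.gcd (Nat.gcd (Nat.gcd (Nat.gcd N a1) a2) a3) a4 = 1)
    (hsum : N ∣ a1 + a2 + a3 + a4)
    (hpole : a1 = N ∨ a2 = N ∨ a3 = N ∨ a4 = N) :
    sigmaSum N a1 a2 a3 a4 = 0 := by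
  have hN0 : (N : ℚ) ≠ 0 := by positivity
  unfold sigmaSum
  rcases hpole with h | h | h | h <;> rw [h] at hsum ⊢
  · simp only [Nat.gcd_self, show ∀ b : ℕ, Nat.gcd N (N + b) = Nat.gcd N b from
      fun b => by rw [Nat.add_comm, Nat.gcd_add_self_right]]
    field_simp; ring
  · have e12 : Nat.gcd N (a1 + N) = Nat.gcd N a1 := Nat.gcd_add_self_right _ _
    have e13 : Nat.gcd N (a1 + a3) = Nat.gcd N a4 := by
      have h' : N ∣ (a1 + a3) + (N + a4) := by
        obtain ⟨k, hk⟩ := hsum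
        exact ⟨k, by omega⟩
      rw [gcd_compl h', Nat.add_comm, Nat.gcd_add_self_right]
    have e14 : Nat.gcd N (a1 + a4) = Nat.gcd N a3 := by
      have h' : N ∣ (a1 + a4) + (N + a3) := by
        obtain ⟨k, hk⟩ := hsum
        exact ⟨k, by omega⟩
      rw [gcd_compl h', Nat.add_comm, Nat.gcd_add_self_right]
    rw [e12, e13, e14, Nat.gcd_self]
    field_simp; ring
  · have e13 : Nat.gcd N (a1 + N) = Nat.gcd N a1 := Nat.gcd_add_self_right _ _
    have e12 : Nat.gcd N (a1 + a2) = Nat.gcd N a4 := by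
      have h' : N ∣ (a1 + a2) + (N + a4) := by
        obtain ⟨k, hk⟩ := hsum
        exact ⟨k, by omega⟩
      rw [gcd_compl h', Nat.add_comm, Nat.gcd_add_self_right]
    have e14 : Nat.gcd N (a1 + a4) = Nat.gcd N a2 := by
      have h' : N ∣ (a1 + a4) + (N + a2) := by
        obtain ⟨k, hk⟩ := hsum
        exact ⟨k, by omega⟩
      rw [gcd_compl h', Nat.add_comm, Nat.gcd_add_self_right]
    rw [e12, e13, e14, Nat.gcd_self]
    field_simp; ring
  · have e14 : Nat.gcd N (a1 + N) = Nat.gcd N a1 := Nat.gcd_add_self_right _ _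
    have e12 : Nat.gcd N (a1 + a2) = Nat.gcd N a3 := by
      have h' : N ∣ (a1 + a2) + (N + a3) := by
        obtain ⟨k, hk⟩ := hsum
        exact ⟨k, by omega⟩
      rw [gcd_compl h', Nat.add_comm, Nat.gcd_add_self_right]
    have e13 : Nat.gcd N (a1 + a3) = Nat.gcd N a2 := by
      have h' : N ∣ (a1 + a3) + (N + a2) := by
        obtain ⟨k, hk⟩ := hsum
        exact ⟨k, by omega⟩
      rw [gcd_compl h', Nat.add_comm, Nat.gcd_add_self_right]
    rw [e12, e13, e14, Nat.gcd_self]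
    field_simp; ring
end

section
/- Let (N; a₁, a₂, a₃, a₄) be admissible with a₁ = N. Then Σ⁻(N; a₁, a₂, a₃, a₄) ≥ N/4. -/
/-- The contribution of the branch point with parameter `a` to formula (3.7): it equals
`gcd(N,a)²/(12N)` when `N/gcd(N,a)` is odd and `−gcd(N,a)²/(6N)` when it is even. -/
noncomputable def minusTerm (N a : ℕ) : ℚ :=
  if Odd (N / Nat.gcd N a) then (Nat.gcd N a : ℚ) ^ 2 / (12 * N)
  else -((Nat.gcd N a : ℚ) ^ 2) / (6 * N)

/-- The expression from formula (3.7) of the paper: the sum of the nonnegative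
Lyapunov exponents of the bundle `H¹₋` over the Teichmüller curve of
`M_N(a₁,a₂,a₃,a₄)`. -/
noncomputable def sigmaMinus (N a1 a2 a3 a4 : ℕ) : ℚ :=
  (N : ℚ) / 6
    + minusTerm N a1 + minusTerm N a2 + minusTerm N a3 + minusTerm N a4
    + ((Nat.gcd N (a1 + a2) : ℚ) ^ 2 + (Nat.gcd N (a1 + a3) : ℚ) ^ 2 +
        (Nat.gcd N (a1 + a4) : ℚ) ^ 2) / (6 * N)

lemma minusTerm_lower (N a : ℕ) (hN : 0 < N) :
    -((Nat.gcd N a : ℚ) ^ 2) / (6 * N) ≤ minusTerm N a := by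
  have hNq : (0 : ℚ) < N := by exact_mod_cast hN
  unfold minusTerm
  split
  · have h : (0 : ℚ) ≤ (Nat.gcd N a : ℚ) ^ 2 := by positivity
    rw [div_le_div_iff₀ (by linarith) (by linarith)]
    nlinarith
  · exact le_refl _

/-- Key estimate in the proof of Theorem 3.10: for admissible parameters with `a₁ = N`,
one has `Σ⁻(N; a₁,a₂,a₃,a₄) ≥ N/4`. -/
theorem stmt8 (N a1 a2 a3 a4 : ℕ) (hN : 1 < N)
    (ha1 : 0 < a1) (ha2 : 0 < a2) (ha3 : 0 < a3) (ha4 : 0 < a4)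
    (hb1 : a1 ≤ N) (hb2 : a2 ≤ N) (hb3 : a3 ≤ N) (hb4 : a4 ≤ N)
    (hgcd : Nat.gcd (Nat.gcd (Nat.gcd (Nat.gcd N a1) a2) a3) a4 = 1)
    (hsum : N ∣ a1 + a2 + a3 + a4)
    (hone : a1 = N) :
    (N : ℚ) / 4 ≤ sigmaMinus N a1 a2 a3 a4 := by
  rw [hone]
  have hN0 : 0 < N := by omega
  have hNq : (0 : ℚ) < N := by exact_mod_cast hN0
  have hg1 : minusTerm N N = (N : ℚ) / 12 := by
    unfold minusTerm
    rw [Nat.gcd_self, Nat.div_self hN0]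
    simp only [if_pos odd_one]
    field_simp
  have hgadd : ∀ a : ℕ, Nat.gcd N (N + a) = Nat.gcd N a := by
    intro a
    rw [Nat.add_comm, Nat.gcd_add_self_right]
  have h2 := minusTerm_lower N a2 hN0
  have h3 := minusTerm_lower N a3 hN0
  have h4 := minusTerm_lower N a4 hN0
  unfold sigmaMinus
  rw [hg1, hgadd a2, hgadd a3, hgadd a4]
  have e2 : (0:ℚ) ≤ minusTerm N a2 + (Nat.gcd N a2 : ℚ) ^ 2 / (6 * N) := by
    have : -((Nat.gcd N a2 : ℚ) ^ 2) / (6 * N) = -((Nat.gcd N a2 : ℚ) ^ 2 / (6 * N)) := by ring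
    linarith [h2, this ▸ h2]
  have e3 : (0:ℚ) ≤ minusTerm N a3 + (Nat.gcd N a3 : ℚ) ^ 2 / (6 * N) := by
    have : -((Nat.gcd N a3 : ℚ) ^ 2) / (6 * N) = -((Nat.gcd N a3 : ℚ) ^ 2 / (6 * N)) := by ring
    linarith [this ▸ h3]
  have e4 : (0:ℚ) ≤ minusTerm N a4 + (Nat.gcd N a4 : ℚ) ^ 2 / (6 * N) := by
    have : -((Nat.gcd N a4 : ℚ) ^ 2) / (6 * N) = -((Nat.gcd N a4 : ℚ) ^ 2 / (6 * N)) := by ring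
    linarith [this ▸ h4]
  have hsplit : ((Nat.gcd N a2 : ℚ) ^ 2 + (Nat.gcd N a3 : ℚ) ^ 2 + (Nat.gcd N a4 : ℚ) ^ 2) / (6 * N)
      = (Nat.gcd N a2 : ℚ) ^ 2 / (6 * N) + (Nat.gcd N a3 : ℚ) ^ 2 / (6 * N)
        + (Nat.gcd N a4 : ℚ) ^ 2 / (6 * N) := by ring
  rw [hsplit]
  linarith
end

section
/- Let (N; a₁, a₂, a₃, a₄) be admissible and suppose aᵢ = N for at least one index i. Then Σ⁻(N; a₁, a₂, a₃, a₄) ≥ 1, and Σ⁻(N; a₁, a₂, a₃, a₄) = 1 if and only if (N, (a₁,a₂,a₃,a₄)) is, up to a permutation of the aᵢ, one of the following: (2, (2,2,1,1)), (3, (3,1,1,1)), (3, (3,2,2,2)), (4, (4,2,1,1)), (4, (4,2,3,3)). -/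
/-- Natural-number version of the combined contribution of a branch point. -/
def tnat (N x : ℕ) : ℕ :=
  if Odd (N / Nat.gcd N x) then (Nat.gcd N x) ^ 2 else 0

lemma pairgcd {N a b c d : ℕ} (h : N ∣ a + b + c + d) :
    Nat.gcd N (a + b) = Nat.gcd N (c + d) := by
  have h1 : Nat.gcd N (a + b) ∣ c + d := by
    have := Nat.dvd_sub (dvd_trans (Nat.gcd_dvd_left N (a+b)) h) (Nat.gcd_dvd_right N (a+b))
    simpa [show a + b + c + d - (a + b) = c + d by omega] using this
  have h2 : Nat.gcd N (c + d) ∣ a + b := by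
    have hh : N ∣ c + d + (a + b) := by rw [show c + d + (a+b) = a+b+c+d by ring]; exact h
    have := Nat.dvd_sub (dvd_trans (Nat.gcd_dvd_left N (c+d)) hh) (Nat.gcd_dvd_right N (c+d))
    simpa [show c + d + (a + b) - (c + d) = a + b by omega] using this
  exact Nat.dvd_antisymm (Nat.dvd_gcd (Nat.gcd_dvd_left _ _) h1)
    (Nat.dvd_gcd (Nat.gcd_dvd_left _ _) h2)

lemma gcd_N_add (N x : ℕ) : Nat.gcd N (N + x) = Nat.gcd N x := by
  rw [add_comm, Nat.gcd_add_self_right]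

/-- Bridge: closed form for `sigmaMinus` when the first parameter equals `N`. -/
lemma bridge_s9 (N b c d : ℕ) (hN : 0 < N) :
    sigmaMinus N N b c d
      = ((N ^ 2 + (tnat N b + tnat N c + tnat N d) : ℕ) : ℚ) / ((4 * N : ℕ) : ℚ) := by
  have hNQ : (N : ℚ) ≠ 0 := by exact_mod_cast hN.ne'
  unfold sigmaMinus minusTerm tnat
  rw [gcd_N_add, gcd_N_add, gcd_N_add, Nat.gcd_self, Nat.div_self hN]
  simp only [if_pos odd_one]
  split_ifs <;> push_cast <;> field_simp <;> ring

lemma natkey (N b c d : ℕ) (hN : 1 < N) (hb : 0 < b) (hc : 0 < c) (hd : 0 < d)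
    (hbN : b ≤ N) (hcN : c ≤ N) (hdN : d ≤ N)
    (hg : Nat.gcd (Nat.gcd (Nat.gcd N b) c) d = 1)
    (hs : N ∣ N + b + c + d) :
    4 * N ≤ N ^ 2 + (tnat N b + tnat N c + tnat N d) ∧
    (N ^ 2 + (tnat N b + tnat N c + tnat N d) = 4 * N ↔
      ((N = 2 ∧ ({N, b, c, d} : Multiset ℕ) = {2, 2, 1, 1}) ∨
       (N = 3 ∧ ({N, b, c, d} : Multiset ℕ) = {3, 1, 1, 1}) ∨
       (N = 3 ∧ ({N, b, c, d} : Multiset ℕ) = {3, 2, 2, 2}) ∨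
       (N = 4 ∧ ({N, b, c, d} : Multiset ℕ) = {4, 2, 1, 1}) ∨
       (N = 4 ∧ ({N, b, c, d} : Multiset ℕ) = {4, 2, 3, 3}))) := by
  rcases le_or_gt N 4 with h4 | h4
  · interval_cases N <;> interval_cases b <;> interval_cases c <;> interval_cases d <;>
      revert hg hs <;> decide
  · have hineq : 4 * N < N ^ 2 := by nlinarith
    constructor
    · omega
    · constructor
      · intro h; omega
      · rintro (⟨h, -⟩ | ⟨h, -⟩ | ⟨h, -⟩ | ⟨h, -⟩ | ⟨h, -⟩) <;> omega

lemma key (N b c d : ℕ) (hN : 1 < N) (hb : 0 < b) (hc : 0 < c) (hd : 0 < d)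
    (hbN : b ≤ N) (hcN : c ≤ N) (hdN : d ≤ N)
    (hg : Nat.gcd (Nat.gcd (Nat.gcd N b) c) d = 1)
    (hs : N ∣ N + b + c + d) :
    1 ≤ sigmaMinus N N b c d ∧
    (sigmaMinus N N b c d = 1 ↔
      ((N = 2 ∧ ({N, b, c, d} : Multiset ℕ) = {2, 2, 1, 1}) ∨
       (N = 3 ∧ ({N, b, c, d} : Multiset ℕ) = {3, 1, 1, 1}) ∨
       (N = 3 ∧ ({N, b, c, d} : Multiset ℕ) = {3, 2, 2, 2}) ∨
       (N = 4 ∧ ({N, b, c, d} : Multiset ℕ) = {4, 2, 1, 1}) ∨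
       (N = 4 ∧ ({N, b, c, d} : Multiset ℕ) = {4, 2, 3, 3}))) := by
  obtain ⟨h1, h2⟩ := natkey N b c d hN hb hc hd hbN hcN hdN hg hs
  have hN0 : 0 < N := by omega
  rw [bridge_s9 N b c d hN0]
  have hden : (0 : ℚ) < ((4 * N : ℕ) : ℚ) := by
    have : 0 < 4 * N := by omega
    exact_mod_cast this
  constructor
  · rw [le_div_iff₀ hden, one_mul]
    exact_mod_cast h1
  · rw [div_eq_one_iff_eq hden.ne', Nat.cast_inj]
    exact h2

/-- Arithmetic content of Theorem 3.10: for admissible parameters with some `aᵢ = N`,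
one has `Σ⁻ ≥ 1`, with equality exactly for the listed parameters (up to permutation
of the `aᵢ`). -/
theorem stmt9 (N a1 a2 a3 a4 : ℕ) (hN : 1 < N)
    (ha1 : 0 < a1) (ha2 : 0 < a2) (ha3 : 0 < a3) (ha4 : 0 < a4)
    (hb1 : a1 ≤ N) (hb2 : a2 ≤ N) (hb3 : a3 ≤ N) (hb4 : a4 ≤ N)
    (hgcd : Nat.gcd (Nat.gcd (Nat.gcd (Nat.gcd N a1) a2) a3) a4 = 1)
    (hsum : N ∣ a1 + a2 + a3 + a4)
    (hpole : a1 = N ∨ a2 = N ∨ a3 = N ∨ a4 = N) :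
    1 ≤ sigmaMinus N a1 a2 a3 a4 ∧
    (sigmaMinus N a1 a2 a3 a4 = 1 ↔
      ((N = 2 ∧ ({a1, a2, a3, a4} : Multiset ℕ) = {2, 2, 1, 1}) ∨
       (N = 3 ∧ ({a1, a2, a3, a4} : Multiset ℕ) = {3, 1, 1, 1}) ∨
       (N = 3 ∧ ({a1, a2, a3, a4} : Multiset ℕ) = {3, 2, 2, 2}) ∨
       (N = 4 ∧ ({a1, a2, a3, a4} : Multiset ℕ) = {4, 2, 1, 1}) ∨
       (N = 4 ∧ ({a1, a2, a3, a4} : Multiset ℕ) = {4, 2, 3, 3}))) := by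
  rcases hpole with h | h | h | h
  · rw [h] at hgcd hsum ⊢
    rw [Nat.gcd_self] at hgcd
    exact key N a2 a3 a4 hN ha2 ha3 ha4 hb2 hb3 hb4 hgcd hsum
  · rw [h] at hgcd hsum ⊢
    -- a2 = N : sigmaMinus N a1 N a3 a4 = sigmaMinus N N a1 a3 a4
    have hs' : N ∣ N + a1 + a3 + a4 := by
      rwa [show N + a1 + a3 + a4 = a1 + N + a3 + a4 by ring]
    have hg' : Nat.gcd (Nat.gcd (Nat.gcd N a1) a3) a4 = 1 := by
      rwa [Nat.gcd_eq_left (Nat.gcd_dvd_left N a1)] at hgcd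
    have e1 : Nat.gcd N (a1 + a3) = Nat.gcd N (N + a4) := by
      apply pairgcd; rwa [show a1 + a3 + N + a4 = a1 + N + a3 + a4 by ring]
    have e2 : Nat.gcd N (a1 + a4) = Nat.gcd N (N + a3) := by
      apply pairgcd; rwa [show a1 + a4 + N + a3 = a1 + N + a3 + a4 by ring]
    have hσ : sigmaMinus N a1 N a3 a4 = sigmaMinus N N a1 a3 a4 := by
      unfold sigmaMinus
      rw [Nat.add_comm a1 N, e1, e2]
      ring
    have hm : ({a1, N, a3, a4} : Multiset ℕ) = {N, a1, a3, a4} := by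
      simp only [Multiset.insert_eq_cons]
      rw [Multiset.cons_swap]
    rw [hσ, hm]
    exact key N a1 a3 a4 hN ha1 ha3 ha4 hb1 hb3 hb4 hg' hs'
  · rw [h] at hgcd hsum ⊢
    have hs' : N ∣ N + a1 + a2 + a4 := by
      rwa [show N + a1 + a2 + a4 = a1 + a2 + N + a4 by ring]
    have hg' : Nat.gcd (Nat.gcd (Nat.gcd N a1) a2) a4 = 1 := by
      have : Nat.gcd (Nat.gcd (Nat.gcd N a1) a2) N = Nat.gcd (Nat.gcd N a1) a2 :=
        Nat.gcd_eq_left (dvd_trans (Nat.gcd_dvd_left _ _) (Nat.gcd_dvd_left N a1))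
      rwa [this] at hgcd
    have e1 : Nat.gcd N (a1 + a2) = Nat.gcd N (N + a4) := by
      exact pairgcd hsum
    have e2 : Nat.gcd N (a1 + a4) = Nat.gcd N (N + a2) := by
      apply pairgcd; rwa [show a1 + a4 + N + a2 = a1 + a2 + N + a4 by ring]
    have hσ : sigmaMinus N a1 a2 N a4 = sigmaMinus N N a1 a2 a4 := by
      unfold sigmaMinus
      rw [Nat.add_comm a1 N, e1, e2]
      ring
    have hm : ({a1, a2, N, a4} : Multiset ℕ) = {N, a1, a2, a4} := by
      simp only [Multiset.insert_eq_cons]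
      rw [Multiset.cons_swap a2 N, Multiset.cons_swap a1 N]
    rw [hσ, hm]
    exact key N a1 a2 a4 hN ha1 ha2 ha4 hb1 hb2 hb4 hg' hs'
  · rw [h] at hgcd hsum ⊢
    have hs' : N ∣ N + a1 + a2 + a3 := by
      rwa [show N + a1 + a2 + a3 = a1 + a2 + a3 + N by ring]
    have hg' : Nat.gcd (Nat.gcd (Nat.gcd N a1) a2) a3 = 1 := by
      have : Nat.gcd (Nat.gcd (Nat.gcd (Nat.gcd N a1) a2) a3) N
          = Nat.gcd (Nat.gcd (Nat.gcd N a1) a2) a3 :=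
        Nat.gcd_eq_left (dvd_trans (dvd_trans (Nat.gcd_dvd_left _ _) (Nat.gcd_dvd_left _ _))
          (Nat.gcd_dvd_left N a1))
      rwa [this] at hgcd
    have e1 : Nat.gcd N (a1 + a2) = Nat.gcd N (N + a3) := by
      apply pairgcd; rwa [show a1 + a2 + N + a3 = a1 + a2 + a3 + N by ring]
    have e2 : Nat.gcd N (a1 + a3) = Nat.gcd N (N + a2) := by
      apply pairgcd; rwa [show a1 + a3 + N + a2 = a1 + a2 + a3 + N by ring]
    have hσ : sigmaMinus N a1 a2 a3 N = sigmaMinus N N a1 a2 a3 := by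
      unfold sigmaMinus
      rw [Nat.add_comm a1 N, e1, e2]
      ring
    have hm : ({a1, a2, a3, N} : Multiset ℕ) = {N, a1, a2, a3} := by
      simp only [Multiset.insert_eq_cons]
      rw [show ({N} : Multiset ℕ) = N ::ₘ (0 : Multiset ℕ) from rfl,
        show ({a3} : Multiset ℕ) = a3 ::ₘ (0 : Multiset ℕ) from rfl,
        Multiset.cons_swap a3 N, Multiset.cons_swap a2 N, Multiset.cons_swap a1 N]
    rw [hσ, hm]
    exact key N a1 a2 a3 hN ha1 ha2 ha3 hb1 hb2 hb3 hg' hs'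
end

section
/- If H₁ and H₂ are subgroups of SL(2, ℤ) both containing the principal congruence subgroup Γ(2) and having the same index in SL(2, ℤ), then H₁ and H₂ are conjugate in SL(2, ℤ). -/
open Matrix CongruenceSubgroup Pointwise

open scoped MatrixGroups

private instance sl2z2DecEq : DecidableEq SL(2, ZMod 2) :=
  fun a b => decidable_of_iff (a.1 = b.1) Subtype.ext_iff.symm

/-- Lifts of the six elements of `SL(2, ZMod 2)` to `SL(2, ℤ)`. -/
private def sl2Lifts : List SL(2, ℤ) :=
  [⟨!![1,0;0,1], by decide⟩, ⟨!![1,1;0,1], by decide⟩, ⟨!![1,0;1,1], by decide⟩,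
   ⟨!![0,1;-1,0], by decide⟩, ⟨!![0,1;-1,1], by decide⟩, ⟨!![1,1;1,2], by decide⟩]

private lemma sl2_mem_lifts : ∀ y : SL(2, ZMod 2),
    y ∈ sl2Lifts.map (Matrix.SpecialLinearGroup.map (Int.castRingHom (ZMod 2))) := by decide

private lemma sl2_mod_surj :
    Function.Surjective (Matrix.SpecialLinearGroup.map (Int.castRingHom (ZMod 2)) :
      SL(2, ℤ) →* SL(2, ZMod 2)) := by
  intro y
  obtain ⟨x, -, hx⟩ := List.mem_map.mp (sl2_mem_lifts y)
  exact ⟨x, hx⟩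

private lemma card_sl2_zmod2 : Nat.card SL(2, ZMod 2) = 6 := by
  rw [Nat.card_eq_fintype_card]; decide

private lemma fact6_2 : (6 : ℕ).factorization 2 = 1 := by
  rw [show (6:ℕ) = 2 * 3 by norm_num, Nat.factorization_mul (by norm_num) (by norm_num),
    (by norm_num : Nat.Prime 2).factorization, (by norm_num : Nat.Prime 3).factorization]
  simp

private lemma fact6_3 : (6 : ℕ).factorization 3 = 1 := by
  rw [show (6:ℕ) = 2 * 3 by norm_num, Nat.factorization_mul (by norm_num) (by norm_num),
    (by norm_num : Nat.Prime 2).factorization, (by norm_num : Nat.Prime 3).factorization]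
  simp

private lemma sylow_conj {p : ℕ} [Fact p.Prime] (K1 K2 : Subgroup SL(2, ZMod 2))
    (h1 : Nat.card K1 = p ^ (Nat.card SL(2, ZMod 2)).factorization p)
    (h2 : Nat.card K2 = p ^ (Nat.card SL(2, ZMod 2)).factorization p) :
    ∃ k : SL(2, ZMod 2), K2 = K1.map (MulAut.conj k).toMonoidHom := by
  obtain ⟨k, hk⟩ := MulAction.exists_smul_eq SL(2, ZMod 2)
    (Sylow.ofCard K1 h1) (Sylow.ofCard K2 h2)
  refine ⟨k, ?_⟩
  have : ((k • Sylow.ofCard K1 h1 : Sylow p SL(2, ZMod 2)) : Subgroup SL(2, ZMod 2))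
      = MulAut.conj k • K1 := by
    rw [Sylow.coe_subgroup_smul, Sylow.coe_ofCard]
  rw [← Sylow.coe_ofCard K2 h2, ← hk, this]
  rfl

private lemma conj_of_index_eq (K1 K2 : Subgroup SL(2, ZMod 2)) (h : K1.index = K2.index) :
    ∃ k : SL(2, ZMod 2), K2 = K1.map (MulAut.conj k).toMonoidHom := by
  have c1 : Nat.card K1 * K1.index = 6 := by rw [Subgroup.card_mul_index, card_sl2_zmod2]
  have c2 : Nat.card K2 * K2.index = 6 := by rw [Subgroup.card_mul_index, card_sl2_zmod2]
  have hne : K1.index ≠ 0 := by rintro h0; rw [h0, mul_zero] at c1; exact absurd c1 (by norm_num)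
  have hcard : Nat.card K1 = Nat.card K2 := by
    rw [h] at c1
    exact Nat.eq_of_mul_eq_mul_right (Nat.pos_of_ne_zero (h ▸ hne)) (c1.trans c2.symm)
  have hdvd : Nat.card K1 ∣ 6 := ⟨K1.index, c1.symm⟩
  have hdiv6 : Nat.divisors 6 = {1, 2, 3, 6} := by decide
  have hmem : Nat.card K1 ∈ Nat.divisors 6 := Nat.mem_divisors.2 ⟨hdvd, by norm_num⟩
  rw [hdiv6] at hmem
  simp only [Finset.mem_insert, Finset.mem_singleton] at hmem
  rcases hmem with hv | hv | hv | hv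
  · -- card = 1
    have e1 : K1 = ⊥ := Subgroup.card_eq_one.mp hv
    have e2 : K2 = ⊥ := Subgroup.card_eq_one.mp (hcard ▸ hv)
    refine ⟨1, ?_⟩
    rw [e1, e2]
    ext x
    simp
  · -- card = 2
    have : Fact (Nat.Prime 2) := ⟨by norm_num⟩
    exact sylow_conj K1 K2 (by rw [card_sl2_zmod2, fact6_2, pow_one, hv])
      (by rw [card_sl2_zmod2, fact6_2, pow_one, ← hcard, hv])
  · -- card = 3
    have : Fact (Nat.Prime 3) := ⟨by norm_num⟩
    exact sylow_conj K1 K2 (by rw [card_sl2_zmod2, fact6_3, pow_one, hv])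
      (by rw [card_sl2_zmod2, fact6_3, pow_one, ← hcard, hv])
  · -- card = 6
    have e1 : K1 = ⊤ := Subgroup.eq_top_of_card_eq _ (by rw [card_sl2_zmod2, hv])
    have e2 : K2 = ⊤ := Subgroup.eq_top_of_card_eq _ (by rw [card_sl2_zmod2, ← hcard, hv])
    refine ⟨1, ?_⟩
    rw [e1, e2]
    ext x
    simp only [Subgroup.mem_top, true_iff, Subgroup.mem_map]
    exact ⟨x, trivial, by simp⟩

/-- From Theorem 2.6 and the remark following it: two subgroups of `SL(2, ℤ)`
containing `Γ(2)` with the same index in `SL(2, ℤ)` are conjugate. -/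
theorem stmt12 (H1 H2 : Subgroup SL(2, ℤ)) (h1 : Gamma 2 ≤ H1) (h2 : Gamma 2 ≤ H2)
    (hindex : H1.index = H2.index) :
    ∃ g : SL(2, ℤ), H2 = H1.map (MulAut.conj g).toMonoidHom := by
  set f : SL(2, ℤ) →* SL(2, ZMod 2) :=
    Matrix.SpecialLinearGroup.map (Int.castRingHom (ZMod 2)) with hf
  have hker : f.ker = Gamma 2 := rfl
  have hc1 : (H1.map f).comap f = H1 := by
    rw [Subgroup.comap_map_eq, hker, sup_eq_left.2 h1]
  have hc2 : (H2.map f).comap f = H2 := by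
    rw [Subgroup.comap_map_eq, hker, sup_eq_left.2 h2]
  have hi : (H1.map f).index = (H2.map f).index := by
    rw [← Subgroup.index_comap_of_surjective _ sl2_mod_surj,
      ← Subgroup.index_comap_of_surjective (H2.map f) sl2_mod_surj, hc1, hc2, hindex]
  obtain ⟨k, hk⟩ := conj_of_index_eq (H1.map f) (H2.map f) hi
  obtain ⟨g, hg⟩ := sl2_mod_surj k
  refine ⟨g, ?_⟩
  ext x
  rw [← hc2, Subgroup.mem_comap, hk, Subgroup.mem_map_equiv, Subgroup.mem_map_equiv]
  have hfx : f ((MulAut.conj g).symm x) = (MulAut.conj k).symm (f x) := by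
    simp [MulAut.conj_symm_apply, ← hg]
    rfl
  rw [← hfx, ← Subgroup.mem_comap, hc1]
end

section
/- Let (N; a₁, a₂, a₃, a₄) be admissible with a₁, a₂, a₃, a₄ pairwise distinct. Suppose there exists an integer k such that a₂ ≡ k·a₁, a₃ ≡ k·a₂, a₄ ≡ k·a₃, and a₁ ≡ k·a₄ (mod N) (i.e. the cover has a symmetry given by a 4-cycle), and suppose that gcd(N, aᵢ + aⱼ) = gcd(N, a_m + a_l) for all pairs of distinct indices i ≠ j and m ≠ l in {1,2,3,4}. Then a contradiction follows (no such data exist). -/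
private lemma step_dvd (g n k x y : ℤ) (hgn : g ∣ n) (hx : g ∣ x)
    (hd : n ∣ k * x - y) : g ∣ y := by
  have h1 : g ∣ k * x - y := hgn.trans hd
  have h2 : g ∣ k * x := hx.mul_left k
  have := h2.sub h1
  simpa using this

private lemma gcd_translate (N x : ℕ) (c A : ℤ) (hA : (N : ℤ) ∣ c * A - (x : ℤ))
    (hcop : IsCoprime (N : ℤ) A) : Nat.gcd N x = Int.gcd (N : ℤ) c := by
  apply Nat.dvd_antisymm
  · set g := Nat.gcd N x with hg
    have hgN : (g : ℤ) ∣ (N : ℤ) := Int.natCast_dvd_natCast.mpr (Nat.gcd_dvd_left _ _)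
    have hgx : (g : ℤ) ∣ (x : ℤ) := Int.natCast_dvd_natCast.mpr (Nat.gcd_dvd_right _ _)
    have hgcA : (g : ℤ) ∣ c * A := by
      have := (hgN.trans hA).add hgx
      simpa using this
    have hgA : IsCoprime (g : ℤ) A := hcop.of_isCoprime_of_dvd_left hgN
    have hgc : (g : ℤ) ∣ c := hgA.dvd_of_dvd_mul_right hgcA
    exact Int.natCast_dvd_natCast.mp (Int.dvd_coe_gcd hgN hgc)
  · set h := Int.gcd (N : ℤ) c with hh
    have hhN : (h : ℤ) ∣ (N : ℤ) := Int.gcd_dvd_left _ _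
    have hhc : (h : ℤ) ∣ c := Int.gcd_dvd_right _ _
    have hhx : (h : ℤ) ∣ (x : ℤ) := by
      have := (hhc.mul_right A).sub (hhN.trans hA)
      simpa using this
    exact Nat.dvd_gcd (Int.natCast_dvd_natCast.mp hhN) (Int.natCast_dvd_natCast.mp hhx)

set_option maxHeartbeats 1600000 in
/-- First exercise of Appendix B (used in the proof of Theorem 2.12): admissible
parameters `(N; a₁, a₂, a₃, a₄)` with pairwise distinct `aᵢ`, admitting a symmetry
given by a 4-cycle `a₁ → a₂ → a₃ → a₄ → a₁` (multiplication by `k` mod `N`), and such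
that `gcd(N, aᵢ + aⱼ)` is the same for all pairs of distinct indices, do not exist. -/
theorem stmt15 (N : ℕ) (a : Fin 4 → ℕ) (hN : 1 < N)
    (hpos : ∀ i, 0 < a i) (hle : ∀ i, a i ≤ N)
    (hgcd : Nat.gcd (Nat.gcd (Nat.gcd (Nat.gcd N (a 0)) (a 1)) (a 2)) (a 3) = 1)
    (hsum : N ∣ a 0 + a 1 + a 2 + a 3)
    (hdist : Function.Injective a)
    (k : ℤ)
    (hc1 : (a 1 : ℤ) ≡ k * (a 0 : ℤ) [ZMOD (N : ℤ)])
    (hc2 : (a 2 : ℤ) ≡ k * (a 1 : ℤ) [ZMOD (N : ℤ)])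
    (hc3 : (a 3 : ℤ) ≡ k * (a 2 : ℤ) [ZMOD (N : ℤ)])
    (hc4 : (a 0 : ℤ) ≡ k * (a 3 : ℤ) [ZMOD (N : ℤ)])
    (hgcdeq : ∀ i j m l : Fin 4, i ≠ j → m ≠ l →
      Nat.gcd N (a i + a j) = Nat.gcd N (a m + a l)) :
    False := by
  have D1 : (N : ℤ) ∣ k * (a 0 : ℤ) - (a 1 : ℤ) := Int.ModEq.dvd hc1
  have D2 : (N : ℤ) ∣ k * (a 1 : ℤ) - (a 2 : ℤ) := Int.ModEq.dvd hc2
  have D3 : (N : ℤ) ∣ k * (a 2 : ℤ) - (a 3 : ℤ) := Int.ModEq.dvd hc3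
  have D4 : (N : ℤ) ∣ k * (a 3 : ℤ) - (a 0 : ℤ) := Int.ModEq.dvd hc4
  -- every common divisor of N and one a i divides all a j
  have cyc : ∀ g : ℤ, g ∣ (N : ℤ) → ∀ i : Fin 4, g ∣ (a i : ℤ) → ∀ j : Fin 4, g ∣ (a j : ℤ) := by
    intro g hg
    have s01 : g ∣ (a 0 : ℤ) → g ∣ (a 1 : ℤ) := fun h => step_dvd g _ k _ _ hg h D1
    have s12 : g ∣ (a 1 : ℤ) → g ∣ (a 2 : ℤ) := fun h => step_dvd g _ k _ _ hg h D2
    have s23 : g ∣ (a 2 : ℤ) → g ∣ (a 3 : ℤ) := fun h => step_dvd g _ k _ _ hg h D3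
    have s30 : g ∣ (a 3 : ℤ) → g ∣ (a 0 : ℤ) := fun h => step_dvd g _ k _ _ hg h D4
    intro i hi j
    fin_cases i <;> fin_cases j <;> simp_all
  -- each a i is coprime to N
  have cop : ∀ i : Fin 4, Nat.gcd N (a i) = 1 := by
    intro i
    have hgN : ((Nat.gcd N (a i) : ℕ) : ℤ) ∣ (N : ℤ) :=
      Int.natCast_dvd_natCast.mpr (Nat.gcd_dvd_left _ _)
    have hga : ((Nat.gcd N (a i) : ℕ) : ℤ) ∣ (a i : ℤ) :=
      Int.natCast_dvd_natCast.mpr (Nat.gcd_dvd_right _ _)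
    have hall : ∀ j : Fin 4, Nat.gcd N (a i) ∣ a j := fun j =>
      Int.natCast_dvd_natCast.mp (cyc _ hgN i hga j)
    have : Nat.gcd N (a i) ∣ 1 := by
      rw [← hgcd]
      exact Nat.dvd_gcd (Nat.dvd_gcd (Nat.dvd_gcd (Nat.dvd_gcd (Nat.gcd_dvd_left _ _)
        (hall 0)) (hall 1)) (hall 2)) (hall 3)
    exact Nat.dvd_one.mp this
  have copZ : ∀ i : Fin 4, IsCoprime ((N : ℤ)) ((a i : ℤ)) := by
    intro i
    rw [Int.isCoprime_iff_gcd_eq_one, Int.gcd_natCast_natCast]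
    exact cop i
  -- k is coprime to N
  have copk : IsCoprime ((N : ℤ)) k := by
    rw [Int.isCoprime_iff_gcd_eq_one]
    have hgk : ((Int.gcd (N : ℤ) k : ℕ) : ℤ) ∣ (a 1 : ℤ) := by
      have h1 : ((Int.gcd (N : ℤ) k : ℕ) : ℤ) ∣ k * (a 0 : ℤ) :=
        (Int.gcd_dvd_right _ _).mul_right _
      have h2 : ((Int.gcd (N : ℤ) k : ℕ) : ℤ) ∣ k * (a 0 : ℤ) - (a 1 : ℤ) :=
        (Int.gcd_dvd_left _ _).trans D1
      have := h1.sub h2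
      simpa using this
    have : Int.gcd (N : ℤ) k ∣ Nat.gcd N (a 1) :=
      Nat.dvd_gcd (Int.natCast_dvd_natCast.mp (Int.gcd_dvd_left _ _))
        (Int.natCast_dvd_natCast.mp hgk)
    rw [cop 1] at this
    exact Nat.dvd_one.mp this
  -- N divides (1+k)(1+k²)
  have hsumZ : (N : ℤ) ∣ (a 0 : ℤ) + (a 1 : ℤ) + (a 2 : ℤ) + (a 3 : ℤ) := by
    exact_mod_cast hsum
  have hprod : (N : ℤ) ∣ (1 + k) * (1 + k ^ 2) * (a 0 : ℤ) := by
    have h1 : (N : ℤ) ∣ ((a 0 : ℤ) + (a 1 : ℤ) + (a 2 : ℤ) + (a 3 : ℤ))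
        + (1 + k + k ^ 2) * (k * (a 0 : ℤ) - (a 1 : ℤ))
        + (1 + k) * (k * (a 1 : ℤ) - (a 2 : ℤ)) + (k * (a 2 : ℤ) - (a 3 : ℤ)) :=
      dvd_add (dvd_add (dvd_add hsumZ (D1.mul_left _)) (D2.mul_left _)) D3
    have e : ((a 0 : ℤ) + (a 1 : ℤ) + (a 2 : ℤ) + (a 3 : ℤ))
        + (1 + k + k ^ 2) * (k * (a 0 : ℤ) - (a 1 : ℤ))
        + (1 + k) * (k * (a 1 : ℤ) - (a 2 : ℤ)) + (k * (a 2 : ℤ) - (a 3 : ℤ))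
        = (1 + k) * (1 + k ^ 2) * (a 0 : ℤ) := by ring
    rwa [e] at h1
  have hNk : (N : ℤ) ∣ (1 + k) * (1 + k ^ 2) := (copZ 0).dvd_of_dvd_mul_right hprod
  -- the two gcd computations
  have D13 : (N : ℤ) ∣ k ^ 2 * (a 0 : ℤ) - (a 2 : ℤ) := by
    have h := dvd_add (D1.mul_left k) D2
    have e : k * (k * (a 0 : ℤ) - (a 1 : ℤ)) + (k * (a 1 : ℤ) - (a 2 : ℤ))
        = k ^ 2 * (a 0 : ℤ) - (a 2 : ℤ) := by ring
    rwa [e] at h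
  have e1 : Nat.gcd N (a 0 + a 1) = Int.gcd (N : ℤ) (1 + k) := by
    apply gcd_translate N _ _ (a 0) _ (copZ 0)
    push_cast
    have e : (1 + k) * (a 0 : ℤ) - ((a 0 : ℤ) + (a 1 : ℤ)) = k * (a 0 : ℤ) - (a 1 : ℤ) := by ring
    rw [e]; exact D1
  have e2 : Nat.gcd N (a 0 + a 2) = Int.gcd (N : ℤ) (1 + k ^ 2) := by
    apply gcd_translate N _ _ (a 0) _ (copZ 0)
    push_cast
    have e : (1 + k ^ 2) * (a 0 : ℤ) - ((a 0 : ℤ) + (a 2 : ℤ))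
        = k ^ 2 * (a 0 : ℤ) - (a 2 : ℤ) := by ring
    rw [e]; exact D13
  have deq : Int.gcd (N : ℤ) (1 + k) = Int.gcd (N : ℤ) (1 + k ^ 2) := by
    rw [← e1, ← e2]
    exact hgcdeq 0 1 0 2 (by decide) (by decide)
  set d : ℕ := Int.gcd (N : ℤ) (1 + k) with hd
  have hd1 : (d : ℤ) ∣ 1 + k := Int.gcd_dvd_right _ _
  have hd2 : (d : ℤ) ∣ 1 + k ^ 2 := by rw [deq]; exact Int.gcd_dvd_right _ _
  have hdN : (d : ℤ) ∣ (N : ℤ) := Int.gcd_dvd_left _ _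
  -- d divides 2
  have hdk : IsCoprime (d : ℤ) k := copk.of_isCoprime_of_dvd_left hdN
  have hkk : (d : ℤ) ∣ k * (k - 1) := by
    have := hd2.sub hd1
    have e : 1 + k ^ 2 - (1 + k) = k * (k - 1) := by ring
    rwa [e] at this
  have hk1 : (d : ℤ) ∣ k - 1 := hdk.dvd_of_dvd_mul_left hkk
  have hd2' : (d : ℤ) ∣ 2 := by
    have := hd1.sub hk1
    have e : 1 + k - (k - 1) = (2 : ℤ) := by ring
    rwa [e] at this
  have hdt : d ∣ 2 := by exact_mod_cast hd2'
  -- N divides d * d, hence N divides 4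
  have hNdd : N ∣ d * d := by
    have h1 : (N : ℤ) ∣ GCDMonoid.gcd (N : ℤ) ((1 + k) * (1 + k ^ 2)) :=
      dvd_gcd dvd_rfl hNk
    have h2 : GCDMonoid.gcd (N : ℤ) ((1 + k) * (1 + k ^ 2))
        ∣ GCDMonoid.gcd (N : ℤ) (1 + k) * GCDMonoid.gcd (N : ℤ) (1 + k ^ 2) :=
      gcd_mul_dvd_mul_gcd _ _ _
    have h3 : (N : ℤ) ∣ ((d * d : ℕ) : ℤ) := by
      have := h1.trans h2
      rwa [← Int.coe_gcd, ← Int.coe_gcd, ← deq, ← hd, ← Nat.cast_mul] at this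
    exact_mod_cast h3
  have hN4 : N ∣ 4 := hNdd.trans (Nat.mul_dvd_mul hdt hdt)
  -- but N ≥ 4 by injectivity
  have h4N : 4 ≤ N := by
    have h := Finset.card_le_card_of_injOn (s := (Finset.univ : Finset (Fin 4)))
      (t := Finset.Icc 1 N) a
      (fun i _ => Finset.mem_Icc.mpr ⟨hpos i, hle i⟩) hdist.injOn
    simpa [Nat.card_Icc] using h
  have hN4' : N = 4 := Nat.le_antisymm (Nat.le_of_dvd (by norm_num) hN4) h4N
  subst hN4'
  -- each a i ∈ {1,3}, contradicting injectivity
  have mem : ∀ i : Fin 4, a i = 1 ∨ a i = 3 := by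
    intro i
    have h1 := cop i
    have h2 := hpos i
    have h3 := hle i
    set m := a i with hm
    clear_value m
    interval_cases m <;> revert h1 <;> decide
  have h01 : a 0 ≠ a 1 := fun h => by exact absurd (hdist h) (by decide)
  have h02 : a 0 ≠ a 2 := fun h => by exact absurd (hdist h) (by decide)
  have h12 : a 1 ≠ a 2 := fun h => by exact absurd (hdist h) (by decide)
  rcases mem 0 with h0 | h0 <;> rcases mem 1 with h1 | h1 <;> rcases mem 2 with h2 | h2 <;>
    omega
end

section
/- Let (N; a₁, a₂, a₃, a₄) be admissible. Suppose there exists an integer k with 1 < k < N such that k·a₁ ≡ a₁, k·a₂ ≡ a₂, k·a₃ ≡ a₄, and k·a₄ ≡ a₃ (mod N), and suppose that gcd(a₁ + a₂, N) = gcd(a₁ + a₃, N). Then a contradiction follows (no such data exist). -/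
private lemma key_div (N k a : ℕ) (hN : 0 < N) (hk : 1 < k)
    (h : N ∣ (k - 1) * a) : N / Nat.gcd (k - 1) N ∣ a := by
  set d := Nat.gcd (k - 1) N with hd
  have hk0 : 0 < k - 1 := by omega
  have hdpos : 0 < d := Nat.gcd_pos_of_pos_left _ hk0
  have hdN : d ∣ N := Nat.gcd_dvd_right _ _
  have hdk : d ∣ k - 1 := Nat.gcd_dvd_left _ _
  have hNe : N = d * (N / d) := (Nat.mul_div_cancel' hdN).symm
  have hke : k - 1 = d * ((k - 1) / d) := (Nat.mul_div_cancel' hdk).symm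
  have hcop : Nat.Coprime ((k - 1) / d) (N / d) :=
    Nat.coprime_div_gcd_div_gcd hdpos
  have h2 : d * (N / d) ∣ d * (((k - 1) / d) * a) := by
    rw [← Nat.mul_assoc, ← hke, ← hNe]; exact h
  have h3 : N / d ∣ ((k - 1) / d) * a :=
    (Nat.mul_dvd_mul_iff_left hdpos).mp h2
  exact (Nat.Coprime.dvd_of_dvd_mul_left hcop.symm h3)

/-- Second exercise of Appendix B (used in the proof of Theorem 2.12): admissible
parameters `(N; a₁, a₂, a₃, a₄)` admitting a symmetry fixing `a₁, a₂` and swapping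
`a₃, a₄` (multiplication by `k` mod `N`, with `1 < k < N`) and satisfying
`gcd(a₁ + a₂, N) = gcd(a₁ + a₃, N)` do not exist. -/
theorem stmt16 (N a1 a2 a3 a4 : ℕ) (hN : 1 < N)
    (ha1 : 0 < a1) (ha2 : 0 < a2) (ha3 : 0 < a3) (ha4 : 0 < a4)
    (hb1 : a1 ≤ N) (hb2 : a2 ≤ N) (hb3 : a3 ≤ N) (hb4 : a4 ≤ N)
    (hgcd : Nat.gcd (Nat.gcd (Nat.gcd (Nat.gcd N a1) a2) a3) a4 = 1)
    (hsum : N ∣ a1 + a2 + a3 + a4)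
    (k : ℕ) (hk1 : 1 < k) (hkN : k < N)
    (hc1 : k * a1 ≡ a1 [MOD N])
    (hc2 : k * a2 ≡ a2 [MOD N])
    (hc3 : k * a3 ≡ a4 [MOD N])
    (hc4 : k * a4 ≡ a3 [MOD N])
    (hgcdeq : Nat.gcd (a1 + a2) N = Nat.gcd (a1 + a3) N) :
    False := by
  set d := Nat.gcd (k - 1) N with hd
  set l := N / d with hl
  have hN0 : 0 < N := by omega
  -- generic conversion: k*a ≡ a [MOD N] → N ∣ (k-1)*a
  have conv : ∀ a : ℕ, k * a ≡ a [MOD N] → N ∣ (k - 1) * a := by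
    intro a h
    have hle : a ≤ k * a := Nat.le_mul_of_pos_left a (by omega)
    have := (Nat.modEq_iff_dvd' hle).mp h.symm
    have heq : k * a - a = (k - 1) * a := by
      rw [Nat.sub_one_mul]
    rwa [heq] at this
  have hla1 : l ∣ a1 := key_div N k a1 hN0 hk1 (conv a1 hc1)
  have hla2 : l ∣ a2 := key_div N k a2 hN0 hk1 (conv a2 hc2)
  have hsum34 : k * (a3 + a4) ≡ a3 + a4 [MOD N] := by
    have := hc3.add hc4
    calc k * (a3 + a4) = k * a3 + k * a4 := by ring
      _ ≡ a4 + a3 [MOD N] := this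
      _ = a3 + a4 := by ring
  have hla34 : l ∣ a3 + a4 := key_div N k (a3 + a4) hN0 hk1 (conv _ hsum34)
  have hlN : l ∣ N := Nat.div_dvd_of_dvd (Nat.gcd_dvd_right _ _)
  have hlg : l ∣ Nat.gcd (a1 + a2) N :=
    Nat.dvd_gcd (Nat.dvd_add hla1 hla2) hlN
  rw [hgcdeq] at hlg
  have hla13 : l ∣ a1 + a3 := hlg.trans (Nat.gcd_dvd_left _ _)
  have hla3 : l ∣ a3 := (Nat.dvd_add_right hla1).mp hla13
  have hla4 : l ∣ a4 := (Nat.dvd_add_right hla3).mp hla34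
  have hl1 : l ∣ 1 := by
    rw [← hgcd]
    exact Nat.dvd_gcd (Nat.dvd_gcd (Nat.dvd_gcd (Nat.dvd_gcd hlN hla1) hla2) hla3) hla4
  have hleq : l = 1 := Nat.eq_one_of_dvd_one hl1
  have hdk : d ∣ k - 1 := Nat.gcd_dvd_left _ _
  have hdle : d ≤ k - 1 := Nat.le_of_dvd (by omega) hdk
  have hNe : N = d * l := (Nat.mul_div_cancel' (Nat.gcd_dvd_right (k-1) N)).symm
  rw [hleq, Nat.mul_one] at hNe
  omega
end
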